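/- arXiv:1701.07915 — 7 statements merged into one kernel-verified Lean document; each statement's English description precedes it below -/
import Mathlib

section
/- For positive integers m and n, the over-(q,t)-binomial coefficient satisfies the recurrence: O(m+n, n) = O(m+n-1, n-1) + q^n · O(m+n-1, n) + t·q^n · O(m+n-2, n-1), where O(a,b) denotes the over-(q,t)-binomial coefficient for overpartitions fitting inside an (a-b)×b rectangle. -/
open Finset Polynomial

/-- `overp m n k N` is the number of overpartitions of `N` with `k` overlined parts,
largest part `≤ m`, and at most `n` parts. An overpartition is a partition together
with a subset of its (distinct) part sizes which are overlined. -/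
noncomputable def overp (m n k N : ℕ) : ℕ :=
  Nat.card {p : Nat.Partition N × Finset ℕ //
    (∀ i ∈ p.1.parts, i ≤ m) ∧ Multiset.card p.1.parts ≤ n ∧
    p.2 ⊆ p.1.parts.toFinset ∧ p.2.card = k}

/-- The over-(q,t)-binomial coefficient for the `m × n` rectangle, evaluated at
elements `q t` of a commutative ring. -/
noncomputable def Oqt {R : Type*} [CommRing R] (q t : R) (m n : ℕ) : R :=
  ∑ N ∈ range (m * n + 1), ∑ k ∈ range (n + 1), (overp m n k N : R) * t ^ k * q ^ N

/-!
Encode an overpartition by the pair `(λ, S)` of its multiset of parts and its set of overlined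
part sizes, so that `Oqt q t m n` is the sum of `t ^ #S * q ^ |λ|` over the pairs fitting in the
`m × n` box. If `λ` has fewer than `n` parts it fits in the `m × (n - 1)` box. Otherwise removing
the first column of its Ferrers diagram (subtract `1` from every part, drop the parts equal to `1`)
lowers `|λ|` by `n`: when `1` is not overlined this is a bijection onto the `(m - 1) × n` box, and
when it is, the removed column carries one overlined part and at least one part vanishes, giving a
bijection onto the `(m - 1) × (n - 1)` box at the extra cost `t`.
-/

namespace Overpartition

def dropColumn (l : Multiset ℕ) : Multiset ℕ := (l.filter (· ≠ 1)).map (· - 1)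

def addColumn (l : Multiset ℕ) (j : ℕ) : Multiset ℕ := l.map (· + 1) + Multiset.replicate j 1

section Column

variable {l : Multiset ℕ} {i j m : ℕ}

lemma mem_dropColumn : i ∈ dropColumn l ↔ ∃ a ∈ l, a ≠ 1 ∧ a - 1 = i := by
  simp [dropColumn, and_assoc]

lemma mem_addColumn : i ∈ addColumn l j ↔ (∃ a ∈ l, a + 1 = i) ∨ (j ≠ 0 ∧ i = 1) := by
  simp [addColumn, Multiset.mem_replicate, eq_comm]

lemma card_addColumn : Multiset.card (addColumn l j) = Multiset.card l + j := by
  simp [addColumn]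

lemma sum_addColumn : (addColumn l j).sum = l.sum + Multiset.card l + j := by
  simp [addColumn, Multiset.sum_map_add, Multiset.sum_replicate, add_assoc]

lemma card_dropColumn_add_count : Multiset.card (dropColumn l) + l.count 1 = Multiset.card l := by
  rw [dropColumn, Multiset.card_map, Multiset.count_eq_card_filter_eq, add_comm,
    ← Multiset.card_add]
  simp_rw [eq_comm (a := 1)]
  exact congrArg _ (Multiset.filter_add_not (· = 1) l)

lemma dropColumn_addColumn (hl : ∀ i ∈ l, 0 < i) : dropColumn (addColumn l j) = l := by
  have hfilter : (l.map (· + 1)).filter (· ≠ 1) = l.map (· + 1) :=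
    Multiset.filter_eq_self.2 fun a ha => by
      obtain ⟨b, hb, rfl⟩ := Multiset.mem_map.1 ha
      have := hl b hb
      omega
  simp [dropColumn, addColumn, Multiset.filter_add, hfilter, Multiset.map_map,
    Multiset.filter_eq_nil, Multiset.mem_replicate]

lemma addColumn_dropColumn (hl : ∀ i ∈ l, 0 < i) : addColumn (dropColumn l) (l.count 1) = l := by
  have hmap : ((l.filter (· ≠ 1)).map (· - 1)).map (· + 1) = l.filter (· ≠ 1) := by
    rw [Multiset.map_map]
    conv_rhs => rw [← Multiset.map_id (l.filter (· ≠ 1))]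
    refine Multiset.map_congr rfl fun a ha => ?_
    have := hl a (Multiset.mem_of_mem_filter ha)
    simp only [Function.comp_apply, id]
    omega
  rw [addColumn, dropColumn, hmap, ← Multiset.filter_eq', add_comm]
  simpa only [not_not] using Multiset.filter_add_not (· = 1) l

lemma sum_dropColumn_add_card (hl : ∀ i ∈ l, 0 < i) :
    (dropColumn l).sum + Multiset.card l = l.sum := by
  conv_rhs => rw [← addColumn_dropColumn hl]
  rw [sum_addColumn, ← card_dropColumn_add_count, add_assoc]

lemma addColumn_dropColumn_of_card_eq {n : ℕ} (hl : ∀ i ∈ l, 0 < i) (hn : Multiset.card l = n) :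
    addColumn (dropColumn l) (n - Multiset.card (dropColumn l)) = l := by
  have := card_dropColumn_add_count (l := l)
  rw [show n - Multiset.card (dropColumn l) = l.count 1 by omega, addColumn_dropColumn hl]

lemma forall_mem_dropColumn (hl : ∀ i ∈ l, 0 < i ∧ i ≤ m + 1) :
    ∀ i ∈ dropColumn l, 0 < i ∧ i ≤ m := by
  intro i hi
  obtain ⟨a, ha, ha1, rfl⟩ := mem_dropColumn.1 hi
  have := hl a ha
  omega

lemma forall_mem_addColumn (hl : ∀ i ∈ l, 0 < i ∧ i ≤ m) :
    ∀ i ∈ addColumn l j, 0 < i ∧ i ≤ m + 1 := by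
  intro i hi
  rcases mem_addColumn.1 hi with ⟨a, ha, rfl⟩ | ⟨-, rfl⟩
  · have := hl a ha
    omega
  · omega

section Shift

variable {S T : Finset ℕ}

lemma image_pred_image_succ : (T.image (· + 1)).image (· - 1) = T := by
  simp [Finset.image_image, Function.comp_def]

lemma image_succ_image_pred (hS : ∀ s ∈ S, 0 < s) : (S.image (· - 1)).image (· + 1) = S := by
  rw [Finset.image_image]
  conv_rhs => rw [← Finset.image_id (s := S)]
  refine Finset.image_congr fun s hs => ?_
  have := hS s hs
  simp only [Function.comp_apply, id]
  omega

lemma card_image_pred (hS : ∀ s ∈ S, 0 < s) : #(S.image (· - 1)) = #S :=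
  Finset.card_image_of_injOn fun a ha b hb hab => by
    have := hS a ha
    have := hS b hb
    omega

lemma one_notMem_image_succ (hT : ∀ s ∈ T, 0 < s) : 1 ∉ T.image (· + 1) := by
  simp only [Finset.mem_image, not_exists, not_and]
  intro s hs h
  have := hT s hs
  omega

lemma image_pred_subset_toFinset_dropColumn (hS : S ⊆ l.toFinset) (h1 : 1 ∉ S) :
    S.image (· - 1) ⊆ (dropColumn l).toFinset := by
  intro i hi
  obtain ⟨s, hs, rfl⟩ := Finset.mem_image.1 hi
  exact Multiset.mem_toFinset.2 (mem_dropColumn.2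
    ⟨s, Multiset.mem_toFinset.1 (hS hs), fun h => h1 (h ▸ hs), rfl⟩)

lemma image_succ_subset_toFinset_addColumn (hT : T ⊆ l.toFinset) :
    T.image (· + 1) ⊆ (addColumn l j).toFinset := by
  intro i hi
  obtain ⟨s, hs, rfl⟩ := Finset.mem_image.1 hi
  exact Multiset.mem_toFinset.2 (mem_addColumn.2 (.inl ⟨s, Multiset.mem_toFinset.1 (hT hs), rfl⟩))

end Shift

end Column

def boundedParts (m n : ℕ) : Finset (Multiset ℕ) :=
  (range (n + 1)).biUnion fun j => ((Icc 1 m).sym j).image (↑)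

lemma mem_boundedParts {l : Multiset ℕ} {m n : ℕ} :
    l ∈ boundedParts m n ↔ (∀ i ∈ l, 0 < i ∧ i ≤ m) ∧ Multiset.card l ≤ n := by
  simp only [boundedParts, mem_biUnion, mem_range, mem_image, mem_sym_iff, mem_Icc,
    Nat.lt_succ_iff]
  constructor
  · rintro ⟨j, hj, s, hs, rfl⟩
    exact ⟨fun i hi => hs i hi, by simpa using hj⟩
  · rintro ⟨hl, hn⟩
    exact ⟨_, hn, ⟨l, rfl⟩, fun i hi => hl i hi, rfl⟩

def box (m n : ℕ) : Finset (Multiset ℕ × Finset ℕ) :=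
  {x ∈ boundedParts m n ×ˢ (Icc 1 m).powerset | x.2 ⊆ x.1.toFinset}

lemma mem_box {m n : ℕ} {x : Multiset ℕ × Finset ℕ} :
    x ∈ box m n ↔
      (∀ i ∈ x.1, 0 < i ∧ i ≤ m) ∧ Multiset.card x.1 ≤ n ∧ x.2 ⊆ x.1.toFinset := by
  simp only [box, mem_filter, mem_product, mem_boundedParts, mem_powerset, and_assoc]
  refine ⟨fun ⟨hl, hn, _, hS⟩ => ⟨hl, hn, hS⟩, fun ⟨hl, hn, hS⟩ => ⟨hl, hn, fun i hi => ?_, hS⟩⟩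
  have := hl i (Multiset.mem_toFinset.1 (hS hi))
  simp only [mem_Icc]
  omega

lemma overp_eq_card_filter_box (m n k N : ℕ) :
    overp m n k N = #{x ∈ box m n | x.1.sum = N ∧ #x.2 = k} := by
  rw [overp, ← Nat.card_eq_finsetCard]
  refine Nat.card_congr
    { toFun := fun p => ⟨(p.1.1.parts, p.1.2), ?_⟩
      invFun := fun x => ⟨(⟨x.1.1, ?_, ?_⟩, x.1.2), ?_⟩
      left_inv := fun p => rfl
      right_inv := fun x => rfl }
  · obtain ⟨⟨p, S⟩, hm, hn, hS, hk⟩ := p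
    simp only [mem_filter, mem_box]
    exact ⟨⟨fun i hi => ⟨p.parts_pos hi, hm i hi⟩, hn, hS⟩, p.parts_sum, hk⟩
  all_goals obtain ⟨⟨l, S⟩, hx⟩ := x
  all_goals simp only [mem_filter, mem_box] at hx
  · exact fun hi => (hx.1.1 _ hi).1
  · exact hx.2.1
  · exact ⟨fun i hi => (hx.1.1 i hi).2, hx.1.2.1, hx.1.2.2, hx.2.2⟩

lemma sum_le_of_mem_box {m n : ℕ} {x : Multiset ℕ × Finset ℕ} (hx : x ∈ box m n) :
    x.1.sum ≤ m * n := by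
  obtain ⟨hl, hn, -⟩ := mem_box.1 hx
  calc x.1.sum ≤ Multiset.card x.1 • m := Multiset.sum_le_card_nsmul _ _ fun i hi => (hl i hi).2
    _ ≤ m * n := by rw [smul_eq_mul, mul_comm]; exact Nat.mul_le_mul_left m hn

lemma card_le_of_mem_box {m n : ℕ} {x : Multiset ℕ × Finset ℕ} (hx : x ∈ box m n) :
    #x.2 ≤ n := by
  obtain ⟨-, hn, hS⟩ := mem_box.1 hx
  exact (card_le_card hS).trans ((Multiset.toFinset_card_le _).trans hn)

theorem Oqt_eq_sum_box {R : Type*} [CommRing R] (q t : R) (m n : ℕ) :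
    Oqt q t m n = ∑ x ∈ box m n, t ^ #x.2 * q ^ x.1.sum := calc
  Oqt q t m n = ∑ N ∈ range (m * n + 1), ∑ k ∈ range (n + 1),
      ∑ x ∈ {x ∈ {x ∈ box m n | x.1.sum = N} | #x.2 = k}, t ^ #x.2 * q ^ x.1.sum := by
    refine sum_congr rfl fun N _ => sum_congr rfl fun k _ => ?_
    rw [filter_filter, overp_eq_card_filter_box, sum_congr rfl fun x hx => by
      rw [(mem_filter.1 hx).2.1, (mem_filter.1 hx).2.2], sum_const, nsmul_eq_mul, mul_assoc]
  _ = ∑ N ∈ range (m * n + 1), ∑ x ∈ {x ∈ box m n | x.1.sum = N}, t ^ #x.2 * q ^ x.1.sum :=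
    sum_congr rfl fun N _ => sum_fiberwise_of_maps_to
      (fun x hx => mem_range.2 (Nat.lt_succ_of_le (card_le_of_mem_box (mem_filter.1 hx).1))) _
  _ = ∑ x ∈ box m n, t ^ #x.2 * q ^ x.1.sum :=
    sum_fiberwise_of_maps_to (fun x hx => mem_range.2 (Nat.lt_succ_of_le (sum_le_of_mem_box hx))) _

lemma filter_card_ne_box (m n : ℕ) :
    {x ∈ box m (n + 1) | Multiset.card x.1 ≠ n + 1} = box m n := by
  ext x
  simp only [mem_filter, mem_box]
  constructor
  · rintro ⟨⟨hl, hn, hS⟩, hne⟩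
    exact ⟨hl, by omega, hS⟩
  · rintro ⟨hl, hn, hS⟩
    exact ⟨⟨hl, by omega, hS⟩, by omega⟩

section Recurrence

variable {R : Type*} [CommSemiring R] (q t : R) (m n : ℕ)

lemma sum_box_filter_one_notMem :
    ∑ x ∈ box (m + 1) (n + 1) with Multiset.card x.1 = n + 1 ∧ 1 ∉ x.2, t ^ #x.2 * q ^ x.1.sum =
      q ^ (n + 1) * ∑ x ∈ box m (n + 1), t ^ #x.2 * q ^ x.1.sum := by
  rw [mul_sum]
  refine sum_nbij' (fun x => (dropColumn x.1, x.2.image (· - 1)))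
    (fun y => (addColumn y.1 (n + 1 - Multiset.card y.1), y.2.image (· + 1))) ?_ ?_ ?_ ?_ ?_
  all_goals simp only [mem_filter, mem_box]
  · rintro ⟨l, S⟩ ⟨⟨hl, -, hS⟩, hcard, h1⟩
    refine ⟨forall_mem_dropColumn hl, ?_, image_pred_subset_toFinset_dropColumn hS h1⟩
    have := card_dropColumn_add_count (l := l)
    dsimp only at hcard ⊢
    omega
  · rintro ⟨l, T⟩ ⟨hl, hn, hT⟩
    dsimp only at hn
    refine ⟨⟨forall_mem_addColumn hl, ?_, image_succ_subset_toFinset_addColumn hT⟩, ?_, ?_⟩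
    all_goals dsimp only
    · rw [card_addColumn]; omega
    · rw [card_addColumn]; omega
    · exact one_notMem_image_succ fun s hs => (hl s (Multiset.mem_toFinset.1 (hT hs))).1
  · rintro ⟨l, S⟩ ⟨⟨hl, -, hS⟩, hcard, h1⟩
    have hSpos : ∀ s ∈ S, 0 < s := fun s hs => (hl s (Multiset.mem_toFinset.1 (hS hs))).1
    rw [addColumn_dropColumn_of_card_eq (fun i hi => (hl i hi).1) hcard,
      image_succ_image_pred hSpos]
  · rintro ⟨l, T⟩ ⟨hl, -, -⟩
    rw [dropColumn_addColumn (fun i hi => (hl i hi).1), image_pred_image_succ]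
  · rintro ⟨l, S⟩ ⟨⟨hl, -, hS⟩, hcard, -⟩
    have hSpos : ∀ s ∈ S, 0 < s := fun s hs => (hl s (Multiset.mem_toFinset.1 (hS hs))).1
    dsimp only at hcard ⊢
    rw [card_image_pred hSpos, ← sum_dropColumn_add_card (fun i hi => (hl i hi).1), hcard,
      pow_add]
    ring

lemma sum_box_filter_one_mem :
    ∑ x ∈ box (m + 1) (n + 1) with Multiset.card x.1 = n + 1 ∧ 1 ∈ x.2, t ^ #x.2 * q ^ x.1.sum =
      t * q ^ (n + 1) * ∑ x ∈ box m n, t ^ #x.2 * q ^ x.1.sum := by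
  rw [mul_sum]
  refine sum_nbij' (fun x => (dropColumn x.1, (x.2.erase 1).image (· - 1)))
    (fun y => (addColumn y.1 (n + 1 - Multiset.card y.1), insert 1 (y.2.image (· + 1))))
    ?_ ?_ ?_ ?_ ?_
  all_goals simp only [mem_filter, mem_box]
  · rintro ⟨l, S⟩ ⟨⟨hl, -, hS⟩, hcard, h1⟩
    dsimp only at hcard h1 hS ⊢
    refine ⟨forall_mem_dropColumn hl, ?_, image_pred_subset_toFinset_dropColumn
      ((erase_subset 1 S).trans hS) (notMem_erase 1 S)⟩
    have := card_dropColumn_add_count (l := l)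
    have := Multiset.one_le_count_iff_mem.2 (Multiset.mem_toFinset.1 (hS h1))
    omega
  · rintro ⟨l, T⟩ ⟨hl, hn, hT⟩
    dsimp only at hn ⊢
    refine ⟨⟨forall_mem_addColumn hl, ?_, insert_subset ?_
      (image_succ_subset_toFinset_addColumn hT)⟩, ?_, mem_insert_self 1 _⟩
    · rw [card_addColumn]; omega
    · exact Multiset.mem_toFinset.2 (mem_addColumn.2 (.inr ⟨by omega, rfl⟩))
    · rw [card_addColumn]; omega
  · rintro ⟨l, S⟩ ⟨⟨hl, -, hS⟩, hcard, h1⟩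
    have hSpos : ∀ s ∈ S.erase 1, 0 < s :=
      fun s hs => (hl s (Multiset.mem_toFinset.1 (hS (mem_of_mem_erase hs)))).1
    rw [addColumn_dropColumn_of_card_eq (fun i hi => (hl i hi).1) hcard,
      image_succ_image_pred hSpos, insert_erase h1]
  · rintro ⟨l, T⟩ ⟨hl, -, hT⟩
    have hTpos : ∀ s ∈ T, 0 < s := fun s hs => (hl s (Multiset.mem_toFinset.1 (hT hs))).1
    rw [dropColumn_addColumn (fun i hi => (hl i hi).1), erase_insert (one_notMem_image_succ hTpos),
      image_pred_image_succ]
  · rintro ⟨l, S⟩ ⟨⟨hl, -, hS⟩, hcard, h1⟩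
    have hSpos : ∀ s ∈ S.erase 1, 0 < s :=
      fun s hs => (hl s (Multiset.mem_toFinset.1 (hS (mem_of_mem_erase hs)))).1
    dsimp only at hcard h1 ⊢
    rw [card_image_pred hSpos, card_erase_of_mem h1,
      ← sum_dropColumn_add_card (fun i hi => (hl i hi).1), hcard, pow_add,
      ← Nat.sub_add_cancel (card_pos.2 ⟨1, h1⟩), pow_succ, Nat.add_sub_cancel]
    ring

theorem sum_box_succ_succ :
    ∑ x ∈ box (m + 1) (n + 1), t ^ #x.2 * q ^ x.1.sum =
      ∑ x ∈ box (m + 1) n, t ^ #x.2 * q ^ x.1.sum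
        + q ^ (n + 1) * ∑ x ∈ box m (n + 1), t ^ #x.2 * q ^ x.1.sum
        + t * q ^ (n + 1) * ∑ x ∈ box m n, t ^ #x.2 * q ^ x.1.sum := by
  have hsplit := sum_filter_add_sum_filter_not {x ∈ box (m + 1) (n + 1) | Multiset.card x.1 = n + 1}
    (fun x => 1 ∉ x.2) fun x => t ^ #x.2 * q ^ x.1.sum
  simp only [filter_filter, not_not] at hsplit
  rw [← sum_box_filter_one_notMem, ← sum_box_filter_one_mem, add_assoc, hsplit,
    ← filter_card_ne_box (m + 1) n, add_comm, sum_filter_not_add_sum_filter]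

end Recurrence

end Overpartition

theorem stmt1 {R : Type*} [CommRing R] (q t : R) (m n : ℕ) (hm : 0 < m) (hn : 0 < n) :
    Oqt q t m n =
      Oqt q t m (n - 1) + q ^ n * Oqt q t (m - 1) n + t * q ^ n * Oqt q t (m - 1) (n - 1) := by
  obtain ⟨m, rfl⟩ := Nat.exists_eq_add_of_lt hm
  obtain ⟨n, rfl⟩ := Nat.exists_eq_add_of_lt hn
  simp only [zero_add, Nat.add_sub_cancel, Overpartition.Oqt_eq_sum_box]
  exact Overpartition.sum_box_succ_succ q t m n
end

section
/- For positive integers m and n, the over-(q,t)-binomial coefficient satisfies: O(m+n, n) = O(m+n-1, n) + q^m · O(m+n-1, n-1) + t·q^m · O(m+n-2, n-1), where O(a,b) denotes the over-(q,t)-binomial coefficient for the rectangle of width a-b and height b. -/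
open Finset Polynomial

/-!
Sort the overpartitions in the `m × n` box by how the largest allowed part `m` occurs. If `m` is
not a part, they fill the `(m - 1) × n` box. If `m` is a part that is overlined and occurs only
once, deleting it leaves an overpartition in the `(m - 1) × (n - 1)` box with one overlined part
fewer, at weight `t q ^ m`. Otherwise deleting one copy of `m` and keeping the overlined set
leaves an arbitrary overpartition in the `m × (n - 1)` box, at weight `q ^ m`.
-/

instance Subtype.finite_and {α : Type*} (P Q : α → Prop) [Finite {x // P x}] :
    Finite {x // P x ∧ Q x} :=
  Finite.of_equiv _ (Equiv.subtypeSubtypeEquivSubtypeInter P Q)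

theorem Nat.card_subtype_eq_card_and_add_card_and_not {α : Type*} (P Q : α → Prop)
    [Finite {x // P x}] :
    Nat.card {x // P x} = Nat.card {x // P x ∧ Q x} + Nat.card {x // P x ∧ ¬ Q x} := by
  classical
  rw [← Nat.card_congr (Equiv.subtypeSubtypeEquivSubtypeInter P Q),
    ← Nat.card_congr (Equiv.subtypeSubtypeEquivSubtypeInter P (¬ Q ·)), ← Nat.card_sum]
  exact Nat.card_congr (Equiv.sumCompl _).symm

namespace Nat.Partition

def addPart {M : ℕ} (p : Nat.Partition M) (a : ℕ) (ha : 0 < a) : Nat.Partition (M + a) where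
  parts := a ::ₘ p.parts
  parts_pos hi := (Multiset.mem_cons.1 hi).elim (· ▸ ha) p.parts_pos
  parts_sum := by rw [Multiset.sum_cons, p.parts_sum, add_comm]

def erasePart {M a : ℕ} (p : Nat.Partition (M + a)) (ha : a ∈ p.parts) : Nat.Partition M where
  parts := p.parts.erase a
  parts_pos hi := p.parts_pos (Multiset.mem_of_mem_erase hi)
  parts_sum := by
    have := congrArg Multiset.sum (Multiset.cons_erase ha)
    rw [Multiset.sum_cons, p.parts_sum] at this
    omega

@[simp]
theorem addPart_parts {M : ℕ} (p : Nat.Partition M) (a : ℕ) (ha : 0 < a) :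
    (p.addPart a ha).parts = a ::ₘ p.parts := rfl

@[simp]
theorem erasePart_parts {M a : ℕ} (p : Nat.Partition (M + a)) (ha : a ∈ p.parts) :
    (p.erasePart ha).parts = p.parts.erase a := rfl

end Nat.Partition

def IsBoxedOverpartition (m n k : ℕ) {N : ℕ} (p : Nat.Partition N × Finset ℕ) : Prop :=
  (∀ i ∈ p.1.parts, i ≤ m) ∧ Multiset.card p.1.parts ≤ n ∧
    p.2 ⊆ p.1.parts.toFinset ∧ p.2.card = k

theorem overp_eq_card (m n k N : ℕ) :
    overp m n k N = Nat.card {p : Nat.Partition N × Finset ℕ // IsBoxedOverpartition m n k p} :=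
  rfl

instance finite_boxedOverpartition (m n k N : ℕ) :
    Finite {p : Nat.Partition N × Finset ℕ // IsBoxedOverpartition m n k p} := by
  refine Set.Finite.to_subtype <|
    (Set.finite_univ.prod (range (N + 1)).powerset.finite_toSet).subset ?_
  rintro p ⟨-, -, hsub, -⟩
  refine ⟨trivial, mem_powerset.2 fun i hi => mem_range_succ_iff.2 ?_⟩
  exact Nat.Partition.le_of_mem_parts (Multiset.mem_toFinset.1 (hsub hi))

theorem overp_eq_zero_of_lt {m n k N : ℕ} (h : n < k) : overp m n k N = 0 := by
  rw [overp_eq_card, Nat.card_eq_zero]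
  refine Or.inl (isEmpty_subtype _ |>.2 ?_)
  rintro p ⟨-, hcard, hsub, rfl⟩
  have := (card_le_card hsub).trans (Multiset.toFinset_card_le p.1.parts)
  omega

theorem overp_eq_zero_of_mul_lt {m n k N : ℕ} (h : m * n < N) : overp m n k N = 0 := by
  rw [overp_eq_card, Nat.card_eq_zero]
  refine Or.inl (isEmpty_subtype _ |>.2 ?_)
  rintro p ⟨hle, hcard, -, -⟩
  have := Multiset.sum_le_card_nsmul p.1.parts m hle
  rw [p.1.parts_sum, smul_eq_mul] at this
  nlinarith

section Decomposition

variable {m n k : ℕ}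

theorem card_boxed_and_not_mem (N : ℕ) :
    Nat.card {p : Nat.Partition N × Finset ℕ //
        IsBoxedOverpartition (m + 1) n k p ∧ m + 1 ∉ p.1.parts} = overp m n k N := by
  refine Nat.card_congr (Equiv.subtypeEquivRight fun p => ?_)
  refine ⟨fun ⟨⟨hle, h⟩, hm⟩ => ⟨fun i hi => ?_, h⟩,
    fun ⟨hle, h⟩ => ⟨⟨fun i hi => (hle i hi).trans m.le_succ, h⟩, fun hm => ?_⟩⟩
  · exact Nat.le_of_lt_succ <| (hle i hi).lt_of_ne (ne_of_mem_of_not_mem hi hm)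
  · exact absurd (hle _ hm) (by omega)

theorem card_boxed_and_mem_of_lt {N : ℕ} (hN : N < m + 1) :
    Nat.card {p : Nat.Partition N × Finset ℕ //
        IsBoxedOverpartition (m + 1) n k p ∧ m + 1 ∈ p.1.parts} = 0 := by
  rw [Nat.card_eq_zero]
  refine Or.inl (isEmpty_subtype _ |>.2 fun p ⟨_, hm⟩ => ?_)
  exact absurd (Nat.Partition.le_of_mem_parts hm) (by omega)

theorem card_boxed_and_mem_and_not_single (M : ℕ) :
    Nat.card {p : Nat.Partition (M + (m + 1)) × Finset ℕ //
        (IsBoxedOverpartition (m + 1) (n + 1) k p ∧ m + 1 ∈ p.1.parts) ∧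
          ¬ (m + 1 ∈ p.2 ∧ p.1.parts.count (m + 1) = 1)} = overp (m + 1) n k M := by
  classical
  refine Nat.card_congr
    { toFun := fun x => ⟨(x.1.1.erasePart x.2.1.2, x.1.2), ?_⟩
      invFun := fun y => ⟨(y.1.1.addPart (m + 1) m.succ_pos, y.1.2), ?_⟩
      left_inv := fun x => Subtype.ext <| Prod.ext (Nat.Partition.ext <|
        Multiset.cons_erase x.2.1.2) rfl
      right_inv := fun y => Subtype.ext <| Prod.ext (Nat.Partition.ext <|
        Multiset.erase_cons_head _ _) rfl }
  · obtain ⟨⟨⟨hle, hcard, hsub, hk⟩, hm⟩, hsingle⟩ := x.2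
    refine ⟨fun i hi => hle i (Multiset.mem_of_mem_erase hi), ?_, fun a ha => ?_, hk⟩
    · rw [Nat.Partition.erasePart_parts, Multiset.card_erase_of_mem hm, Nat.pred_eq_sub_one]
      omega
    · have hmem := Multiset.mem_toFinset.1 (hsub ha)
      rw [Multiset.mem_toFinset, Nat.Partition.erasePart_parts]
      by_cases hma : a = m + 1
      · subst hma
        have := Multiset.one_le_count_iff_mem.2 hmem
        rw [← Multiset.count_pos, Multiset.count_erase_self]
        have : (x.1.1.parts.count (m + 1)) ≠ 1 := fun h => hsingle ⟨ha, h⟩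
        omega
      · exact (Multiset.mem_erase_of_ne hma).2 hmem
  · obtain ⟨hle, hcard, hsub, hk⟩ := y.2
    refine ⟨⟨⟨fun i hi => ?_, ?_, ?_, hk⟩, Multiset.mem_cons_self _ _⟩,
      fun ⟨ha, hcount⟩ => ?_⟩
    · rcases Multiset.mem_cons.1 hi with rfl | hi
      exacts [le_rfl, hle i hi]
    · simpa using hcard
    · exact hsub.trans (Multiset.toFinset_subset.2 (Multiset.subset_cons _ _))
    · rw [Nat.Partition.addPart_parts, Multiset.count_cons_self] at hcount
      have := Multiset.count_pos.2 (Multiset.mem_toFinset.1 (hsub ha))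
      omega

theorem card_boxed_and_mem_and_single (M : ℕ) :
    Nat.card {p : Nat.Partition (M + (m + 1)) × Finset ℕ //
        (IsBoxedOverpartition (m + 1) (n + 1) (k + 1) p ∧ m + 1 ∈ p.1.parts) ∧
          (m + 1 ∈ p.2 ∧ p.1.parts.count (m + 1) = 1)} = overp m n k M := by
  classical
  have not_mem_of_le {M : ℕ} {p : Nat.Partition M} (hle : ∀ i ∈ p.parts, i ≤ m) :
      m + 1 ∉ p.parts := fun h => absurd (hle _ h) (by omega)
  refine Nat.card_congr
    { toFun := fun x => ⟨(x.1.1.erasePart x.2.1.2, x.1.2.erase (m + 1)), ?_⟩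
      invFun := fun y => ⟨(y.1.1.addPart (m + 1) m.succ_pos, insert (m + 1) y.1.2), ?_⟩
      left_inv := fun x => Subtype.ext <| Prod.ext (Nat.Partition.ext <|
        Multiset.cons_erase x.2.1.2) (insert_erase x.2.2.1)
      right_inv := fun y => Subtype.ext <| Prod.ext (Nat.Partition.ext <|
        Multiset.erase_cons_head _ _) (erase_insert fun h =>
          not_mem_of_le y.2.1 (Multiset.mem_toFinset.1 (y.2.2.2.1 h))) }
  · obtain ⟨⟨⟨hle, hcard, hsub, hk⟩, hm⟩, hs, hsingle⟩ := x.2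
    have hgone : m + 1 ∉ x.1.1.parts.erase (m + 1) := by
      rw [← Multiset.count_pos, Multiset.count_erase_self]
      omega
    refine ⟨fun i hi => ?_, ?_, fun a ha => ?_, ?_⟩
    · exact Nat.le_of_lt_succ <| (hle i (Multiset.mem_of_mem_erase hi)).lt_of_ne
        (ne_of_mem_of_not_mem hi hgone)
    · rw [Nat.Partition.erasePart_parts, Multiset.card_erase_of_mem hm, Nat.pred_eq_sub_one]
      omega
    · obtain ⟨hne, ha⟩ := mem_erase.1 ha
      exact Multiset.mem_toFinset.2 <|
        (Multiset.mem_erase_of_ne hne).2 (Multiset.mem_toFinset.1 (hsub ha))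
    · rw [card_erase_of_mem hs, hk, Nat.add_sub_cancel]
  · obtain ⟨hle, hcard, hsub, hk⟩ := y.2
    have hm := not_mem_of_le hle
    refine ⟨⟨⟨fun i hi => ?_, ?_, ?_, ?_⟩, Multiset.mem_cons_self _ _⟩,
      mem_insert_self _ _, ?_⟩
    · rcases Multiset.mem_cons.1 hi with rfl | hi
      exacts [le_rfl, (hle i hi).trans m.le_succ]
    · simpa using hcard
    · rw [Nat.Partition.addPart_parts, Multiset.toFinset_cons]
      exact insert_subset_insert _ hsub
    · rw [card_insert_of_notMem fun h => hm (Multiset.mem_toFinset.1 (hsub h)), hk]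
    · rw [Nat.Partition.addPart_parts, Multiset.count_cons_self, Multiset.count_eq_zero.2 hm]

theorem card_boxed_and_mem_and_single_zero {N : ℕ} :
    Nat.card {p : Nat.Partition N × Finset ℕ //
        (IsBoxedOverpartition (m + 1) n 0 p ∧ m + 1 ∈ p.1.parts) ∧
          (m + 1 ∈ p.2 ∧ p.1.parts.count (m + 1) = 1)} = 0 := by
  rw [Nat.card_eq_zero]
  refine Or.inl (isEmpty_subtype _ |>.2 fun p ⟨⟨⟨_, _, _, hk⟩, _⟩, hs, _⟩ => ?_)
  exact notMem_empty _ (card_eq_zero.1 hk ▸ hs)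

end Decomposition

theorem overp_succ_eq_add_card (m n k N : ℕ) :
    overp (m + 1) n k N = overp m n k N + Nat.card {p : Nat.Partition N × Finset ℕ //
      IsBoxedOverpartition (m + 1) n k p ∧ m + 1 ∈ p.1.parts} := by
  rw [overp_eq_card, Nat.card_subtype_eq_card_and_add_card_and_not _ (m + 1 ∈ ·.1.parts),
    card_boxed_and_not_mem, add_comm]

-- The coefficients of `t ^ b * q ^ a * ∑ c k N * t ^ k * q ^ N`.
def shift (b a : ℕ) (c : ℕ → ℕ → ℕ) (k N : ℕ) : ℕ :=
  if b ≤ k ∧ a ≤ N then c (k - b) (N - a) else 0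

theorem overp_succ_succ (m n : ℕ) :
    overp (m + 1) (n + 1) =
      overp m (n + 1) + shift 0 (m + 1) (overp (m + 1) n) + shift 1 (m + 1) (overp m n) := by
  funext k N
  simp only [Pi.add_apply, shift, zero_le, true_and, Nat.sub_zero]
  rw [overp_succ_eq_add_card]
  rcases lt_or_ge N (m + 1) with hN | hN
  · rw [card_boxed_and_mem_of_lt hN, if_neg hN.not_ge, if_neg fun h => hN.not_ge h.2]
  obtain ⟨M, rfl⟩ := Nat.exists_eq_add_of_le' hN
  rw [Nat.card_subtype_eq_card_and_add_card_and_not _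
      (fun p => m + 1 ∈ p.2 ∧ p.1.parts.count (m + 1) = 1),
    card_boxed_and_mem_and_not_single, Nat.add_sub_cancel, if_pos hN, add_assoc]
  rcases k with _ | k
  · rw [card_boxed_and_mem_and_single_zero, if_neg (by omega), add_zero, zero_add]
  · rw [card_boxed_and_mem_and_single, if_pos ⟨by omega, hN⟩, Nat.add_sub_cancel,
      add_comm (overp m n k M)]

theorem Finset.sum_range_add_eq_of_forall_lt_eq_zero {M : Type*} [AddCommMonoid M] {f : ℕ → M}
    {a : ℕ} (hf : ∀ N < a, f N = 0) (B : ℕ) :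
    ∑ N ∈ range (a + B), f N = ∑ N ∈ range B, f (a + N) := by
  rw [sum_range_add, sum_eq_zero fun N hN => hf N (mem_range.1 hN), zero_add]

section GeneratingSum

variable {R : Type*} [CommRing R] (q t : R)

def genSum (c : ℕ → ℕ → ℕ) (B K : ℕ) : R :=
  ∑ N ∈ range B, ∑ k ∈ range K, (c k N : R) * t ^ k * q ^ N

theorem genSum_add (c d : ℕ → ℕ → ℕ) (B K : ℕ) :
    genSum q t (c + d) B K = genSum q t c B K + genSum q t d B K := by
  simp only [genSum, Pi.add_apply, Nat.cast_add, add_mul, sum_add_distrib]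

theorem genSum_shift (b a : ℕ) (c : ℕ → ℕ → ℕ) (B K : ℕ) :
    genSum q t (shift b a c) (a + B) (b + K) = t ^ b * q ^ a * genSum q t c B K := by
  rw [genSum, sum_range_add_eq_of_forall_lt_eq_zero fun N hN =>
    sum_eq_zero fun k _ => by simp [shift, hN.not_ge], genSum, mul_sum]
  refine sum_congr rfl fun N _ => ?_
  rw [sum_range_add_eq_of_forall_lt_eq_zero fun k hk => by simp [shift, hk.not_ge], mul_sum]
  refine sum_congr rfl fun k _ => ?_
  simp only [shift, Nat.le_add_right, and_self, if_true, Nat.add_sub_cancel_left, pow_add]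
  ring

theorem genSum_eq_of_le {c : ℕ → ℕ → ℕ} {B B' K K' : ℕ} (hB : B ≤ B') (hK : K ≤ K')
    (hcB : ∀ k N, B ≤ N → c k N = 0) (hcK : ∀ k N, K ≤ k → c k N = 0) :
    genSum q t c B K = genSum q t c B' K' := by
  have hK' : ∀ N, ∑ k ∈ range K, (c k N : R) * t ^ k * q ^ N =
      ∑ k ∈ range K', (c k N : R) * t ^ k * q ^ N := fun N =>
    sum_subset (range_subset_range.2 hK) fun k _ hk => by
      rw [hcK k N (not_lt.1 (mem_range.not.1 hk)), Nat.cast_zero, zero_mul, zero_mul]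
  refine (sum_congr rfl fun N _ => hK' N).trans <|
    sum_subset (range_subset_range.2 hB) fun N _ hN => sum_eq_zero fun k _ => ?_
  rw [hcB k N (not_lt.1 (mem_range.not.1 hN)), Nat.cast_zero, zero_mul, zero_mul]

theorem Oqt_eq_genSum (m n : ℕ) {B K : ℕ} (hB : m * n < B) (hK : n < K) :
    Oqt q t m n = genSum q t (overp m n) B K :=
  genSum_eq_of_le q t hB hK (fun _ _ hN => overp_eq_zero_of_mul_lt (by omega))
    fun _ _ hk => overp_eq_zero_of_lt (by omega)

end GeneratingSum

theorem stmt2 {R : Type*} [CommRing R] (q t : R) (m n : ℕ) (hm : 0 < m) (hn : 0 < n) :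
    Oqt q t m n =
      Oqt q t (m - 1) n + q ^ m * Oqt q t m (n - 1) + t * q ^ m * Oqt q t (m - 1) (n - 1) := by
  obtain ⟨m, rfl⟩ := Nat.exists_eq_add_one_of_ne_zero hm.ne'
  obtain ⟨n, rfl⟩ := Nat.exists_eq_add_one_of_ne_zero hn.ne'
  simp only [Nat.add_sub_cancel]
  have hB : (m + 1) * (n + 1) < (m + 1) + ((m + 1) * n + 1) := by rw [mul_add_one]; omega
  calc Oqt q t (m + 1) (n + 1)
      = genSum q t (overp m (n + 1)) ((m + 1) + ((m + 1) * n + 1)) (n + 1 + 1) +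
          genSum q t (shift 0 (m + 1) (overp (m + 1) n))
            ((m + 1) + ((m + 1) * n + 1)) (0 + (n + 1 + 1)) +
          genSum q t (shift 1 (m + 1) (overp m n))
            ((m + 1) + ((m + 1) * n + 1)) (1 + (n + 1)) := by
        rw [Oqt_eq_genSum q t _ _ hB (lt_add_one _), overp_succ_succ, genSum_add, genSum_add,
          zero_add, add_comm 1]
    _ = _ := by
        rw [genSum_shift, genSum_shift,
          ← Oqt_eq_genSum q t m (n + 1) (hB.trans_le' (by gcongr; omega)) (lt_add_one _),
          ← Oqt_eq_genSum q t (m + 1) n (lt_add_one _) (by omega),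
          ← Oqt_eq_genSum q t m n (by nlinarith) (lt_add_one _)]
        ring
end

section
/- The over-(q,t)-binomial coefficient for an m×n rectangle is symmetric: the number of overpartitions of N with k overlined parts, largest part ≤ m and at most n parts equals the number of overpartitions of N with k overlined parts, largest part ≤ n and at most m parts. -/
open Finset Polynomial

/-!
Conjugating the Young diagram preserves `N` and swaps the largest part with the number of
parts. The overlined parts are carried along through the corners of the diagram: the last row
of length `i` ends in the same cell as the last column of length `#{parts ≥ i}`, so
`i ↦ #{parts ≥ i}` maps the distinct part sizes of a partition bijectively onto those of its
conjugate. Everything is phrased through `countGE s i = #{parts ≥ i}`, for which conjugation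
is the Galois correspondence `i ≤ countGE (conjugate s) j ↔ j ≤ countGE s i` (`i, j ≥ 1`).
-/

lemma le_card_filter_Icc_one_iff {P : ℕ → Prop} [DecidablePred P] (hP : Antitone P)
    {M i : ℕ} (hi : 1 ≤ i) : i ≤ #{x ∈ Icc 1 M | P x} ↔ i ≤ M ∧ P i := by
  constructor
  · intro h
    by_contra hiP
    have hsub : {x ∈ Icc 1 M | P x} ⊆ Icc 1 (i - 1) := by
      intro x hx
      simp only [mem_filter, mem_Icc] at hx ⊢
      refine ⟨hx.1.1, Nat.le_sub_one_of_lt (lt_of_not_ge fun hix => hiP ⟨?_, hP hix hx.2⟩)⟩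
      omega
    have := card_le_card hsub
    simp only [Nat.card_Icc] at this
    omega
  · rintro ⟨hiM, hPi⟩
    have hsub : Icc 1 i ⊆ {x ∈ Icc 1 M | P x} := by
      intro x hx
      simp only [mem_filter, mem_Icc] at hx ⊢
      exact ⟨⟨hx.1, hx.2.trans hiM⟩, hP hx.2 hPi⟩
    simpa using card_le_card hsub

lemma Nat.eq_of_forall_one_le_le_iff {a b : ℕ} (h : ∀ i, 1 ≤ i → (i ≤ a ↔ i ≤ b)) : a = b := by
  refine eq_of_forall_le_iff fun i => ?_
  rcases Nat.eq_zero_or_pos i with rfl | hi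
  · simp
  · exact h i hi

namespace Multiset

def countGE (s : Multiset ℕ) (i : ℕ) : ℕ := s.countP (i ≤ ·)

/-- The column lengths of the Young diagram with row lengths `s`. -/
def conjugate (s : Multiset ℕ) : Multiset ℕ := (Finset.Icc 1 s.sup).val.map s.countGE

variable {s : Multiset ℕ} {i j : ℕ}

lemma countGE_antitone (s : Multiset ℕ) : Antitone s.countGE := fun _ _ h => by
  simp only [countGE, countP_eq_card_filter]
  exact card_le_card (monotone_filter_right s fun _ => h.trans)

lemma countGE_eq_countGE_succ_add_count (s : Multiset ℕ) (i : ℕ) :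
    s.countGE i = s.countGE (i + 1) + s.count i := by
  induction s using Multiset.induction_on with
  | empty => simp [countGE]
  | cons a t ih =>
    simp only [countGE, countP_cons, count_cons] at *
    split_ifs <;> omega

lemma count_eq_countGE_sub (s : Multiset ℕ) (i : ℕ) :
    s.count i = s.countGE i - s.countGE (i + 1) := by
  rw [countGE_eq_countGE_succ_add_count s i]
  omega

lemma countGE_le_card (s : Multiset ℕ) (i : ℕ) : s.countGE i ≤ card s :=
  countP_le_card _ _

lemma countGE_pos_iff (hi : 1 ≤ i) : 0 < s.countGE i ↔ i ≤ s.sup := by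
  refine ⟨fun h => ?_, fun h => Nat.pos_of_ne_zero fun h0 => ?_⟩
  · obtain ⟨a, ha, hia⟩ := countP_pos.mp h
    exact hia.trans (le_sup ha)
  · have : s.sup ≤ i - 1 := Multiset.sup_le.mpr fun a ha => by
      have := countP_eq_zero.mp h0 a ha
      omega
    omega

lemma sum_countGE_Icc_one {B : ℕ} (hB : ∀ a ∈ s, a ≤ B) :
    ∑ i ∈ Finset.Icc 1 B, s.countGE i = s.sum := by
  induction s using Multiset.induction_on with
  | empty => simp [countGE]
  | cons a t ih =>
    have hcount : #{i ∈ Finset.Icc 1 B | i ≤ a} = a := by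
      have haB := hB a (mem_cons_self a t)
      rw [show {i ∈ Finset.Icc 1 B | i ≤ a} = Finset.Icc 1 a by ext; simp; omega]
      simp
    simp only [countGE, countP_cons, sum_add_distrib, sum_boole, Nat.cast_id, sum_cons] at ih ⊢
    rw [ih fun b hb => hB b (mem_cons_of_mem hb), hcount, add_comm]

lemma countGE_conjugate (s : Multiset ℕ) (j : ℕ) :
    s.conjugate.countGE j = #{i ∈ Finset.Icc 1 s.sup | j ≤ s.countGE i} := by
  rw [countGE, conjugate, countP_map]
  rfl

lemma le_countGE_conjugate_iff (hi : 1 ≤ i) (hj : 1 ≤ j) :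
    i ≤ s.conjugate.countGE j ↔ j ≤ s.countGE i := by
  rw [countGE_conjugate, le_card_filter_Icc_one_iff
    (fun _ _ h hj' => hj'.trans (s.countGE_antitone h)) hi]
  exact and_iff_right_of_imp fun h => (countGE_pos_iff hi).mp (by omega)

lemma pos_of_mem_conjugate {v : ℕ} (h : v ∈ s.conjugate) : 0 < v := by
  obtain ⟨i, hi, rfl⟩ := mem_map.mp h
  rw [mem_val, Finset.mem_Icc] at hi
  exact (countGE_pos_iff hi.1).mpr hi.2

lemma le_card_of_mem_conjugate {v : ℕ} (h : v ∈ s.conjugate) : v ≤ card s := by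
  obtain ⟨i, -, rfl⟩ := mem_map.mp h
  exact s.countGE_le_card i

lemma card_conjugate (s : Multiset ℕ) : card s.conjugate = s.sup := by
  simp [conjugate]

lemma sum_conjugate (s : Multiset ℕ) : s.conjugate.sum = s.sum :=
  sum_countGE_Icc_one fun _ => le_sup

lemma countGE_mem_conjugate (hs : ∀ a ∈ s, 0 < a) (hi : i ∈ s) : s.countGE i ∈ s.conjugate :=
  mem_map.mpr ⟨i, by simpa using ⟨hs i hi, le_sup hi⟩, rfl⟩

lemma countGE_conjugate_countGE (hi : i ∈ s) :
    s.conjugate.countGE (s.countGE i) = i := by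
  have hpos : 1 ≤ s.countGE i := countP_pos_of_mem hi le_rfl
  have hdrop : s.countGE (i + 1) < s.countGE i := by
    rw [countGE_eq_countGE_succ_add_count s i]
    exact Nat.lt_add_of_pos_right (count_pos.mpr hi)
  refine Nat.eq_of_forall_one_le_le_iff fun k hk => ?_
  rw [le_countGE_conjugate_iff hk hpos]
  refine ⟨fun h => ?_, fun h => s.countGE_antitone h⟩
  by_contra! hik
  exact (h.trans (s.countGE_antitone hik)).not_gt hdrop

lemma eq_of_countGE_eq {t : Multiset ℕ} (hs : ∀ a ∈ s, 0 < a) (ht : ∀ a ∈ t, 0 < a)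
    (h : ∀ j, 1 ≤ j → s.countGE j = t.countGE j) : s = t := by
  ext a
  rcases Nat.eq_zero_or_pos a with rfl | ha
  · rw [count_eq_zero_of_notMem fun h => (hs 0 h).false,
      count_eq_zero_of_notMem fun h => (ht 0 h).false]
  · rw [count_eq_countGE_sub, count_eq_countGE_sub, h a ha, h (a + 1) (by omega)]

lemma conjugate_conjugate (hs : ∀ a ∈ s, 0 < a) : s.conjugate.conjugate = s :=
  eq_of_countGE_eq (fun _ => pos_of_mem_conjugate) hs fun j hj =>
    Nat.eq_of_forall_one_le_le_iff fun i hi => by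
      rw [le_countGE_conjugate_iff hi hj, le_countGE_conjugate_iff hj hi]

end Multiset

def Nat.Partition.conjugate {N : ℕ} (p : N.Partition) : N.Partition where
  parts := p.parts.conjugate
  parts_pos := Multiset.pos_of_mem_conjugate
  parts_sum := p.parts.sum_conjugate.trans p.parts_sum

namespace Overpartition

def IsInBox (m n k : ℕ) {N : ℕ} (p : Nat.Partition N × Finset ℕ) : Prop :=
  (∀ i ∈ p.1.parts, i ≤ m) ∧ Multiset.card p.1.parts ≤ n ∧
    p.2 ⊆ p.1.parts.toFinset ∧ p.2.card = k

def conjugate {N : ℕ} (p : Nat.Partition N × Finset ℕ) : Nat.Partition N × Finset ℕ :=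
  (p.1.conjugate, p.2.image p.1.parts.countGE)

variable {m n k N : ℕ} {p : Nat.Partition N × Finset ℕ}

lemma conjugate_conjugate (hp : p.2 ⊆ p.1.parts.toFinset) : conjugate (conjugate p) = p := by
  have hpos : ∀ a ∈ p.1.parts, 0 < a := fun _ => p.1.parts_pos
  refine Prod.ext (Nat.Partition.ext (Multiset.conjugate_conjugate hpos)) ?_
  show (p.2.image _).image _ = p.2
  rw [image_image]
  refine (image_congr fun i hi => ?_).trans image_id
  exact Multiset.countGE_conjugate_countGE (Multiset.mem_toFinset.mp (hp hi))

lemma IsInBox.conjugate (h : IsInBox m n k p) : IsInBox n m k (conjugate p) := by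
  obtain ⟨hm, hn, hsub, hk⟩ := h
  have hpos : ∀ a ∈ p.1.parts, 0 < a := fun _ => p.1.parts_pos
  have hmem : ∀ i ∈ p.2, i ∈ p.1.parts := fun i hi => Multiset.mem_toFinset.mp (hsub hi)
  refine ⟨fun v hv => (Multiset.le_card_of_mem_conjugate hv).trans hn, ?_, ?_, ?_⟩
  · exact (Multiset.card_conjugate _).trans_le (Multiset.sup_le.mpr hm)
  · intro v hv
    obtain ⟨i, hi, rfl⟩ := mem_image.mp hv
    exact Multiset.mem_toFinset.mpr (Multiset.countGE_mem_conjugate hpos (hmem i hi))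
  · rw [Overpartition.conjugate, card_image_of_injOn, hk]
    exact Set.LeftInvOn.injOn fun i hi => Multiset.countGE_conjugate_countGE (hmem i hi)

def conjugateEquiv (m n k N : ℕ) :
    {p : Nat.Partition N × Finset ℕ // IsInBox m n k p} ≃
      {p : Nat.Partition N × Finset ℕ // IsInBox n m k p} where
  toFun p := ⟨conjugate p.1, p.2.conjugate⟩
  invFun p := ⟨conjugate p.1, p.2.conjugate⟩
  left_inv p := Subtype.ext (conjugate_conjugate p.2.2.2.1)
  right_inv p := Subtype.ext (conjugate_conjugate p.2.2.2.1)

end Overpartition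

theorem stmt3 (m n k N : ℕ) : overp m n k N = overp n m k N :=
  Nat.card_congr (Overpartition.conjugateEquiv m n k N)
end

section
/- For every positive integer n, as formal power series in z (with coefficients polynomials in q and t): ∑_{k≥0} O(n+k-1, k) z^k q^k = (−t z q^2; q)_{n−1} / (z q; q)_n, where O(n+k-1, k) is the over-(q,t)-binomial coefficient for the (n−1)×k rectangle, and (a;q)_j = ∏_{i=0}^{j−1}(1−a q^i). -/
open Finset Polynomial

/-!
Split the overpartitions in the `(m+1) × (k+1)` box according to the part `m+1`: either it does
not occur, or one copy can be removed leaving an overpartition in the `(m+1) × k` box, or it is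
a single overlined part whose removal leaves an overpartition in the `m × k` box. This gives
`O(m+1,k+1) = O(m,k+1) + q^(m+1) O(m+1,k) + t q^(m+1) O(m,k)`, which for
`F_m(z) = ∑ₖ O(m,k) qᵏ zᵏ` reads `F_{m+1}(z) (1 - q^(m+2) z) = F_m(z) (1 + t q^(m+2) z)`.
Since `F_0(z) = 1 / (1 - q z)`, induction on `m` gives the product formula.
-/

/-- An overpartition is encoded as the multiset of its parts together with the set of overlined
part sizes. The bounds `Iic` and `powerset` only serve to make this a `Finset`; membership is
described by `mem_overpartitionsInBox`. -/
def overpartitionsInBox (m n : ℕ) : Finset (Multiset ℕ × Finset ℕ) :=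
  {x ∈ Iic (n • (Icc 1 m).val) ×ˢ (Icc 1 m).powerset |
    Multiset.card x.1 ≤ n ∧ x.2 ⊆ x.1.toFinset}

lemma mem_overpartitionsInBox {m n : ℕ} {s : Multiset ℕ} {S : Finset ℕ} :
    (s, S) ∈ overpartitionsInBox m n ↔
      (∀ i ∈ s, 0 < i ∧ i ≤ m) ∧ Multiset.card s ≤ n ∧ S ⊆ s.toFinset := by
  simp only [overpartitionsInBox, mem_filter, mem_product, mem_Iic, mem_powerset]
  constructor
  · rintro ⟨⟨hs, -⟩, hcard, hS⟩
    refine ⟨fun i hi => ?_, hcard, hS⟩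
    have := (Multiset.mem_nsmul.mp (Multiset.mem_of_le hs hi)).2
    simp only [Finset.mem_val, Finset.mem_Icc] at this
    omega
  · rintro ⟨hs, hcard, hS⟩
    have hsub : ∀ i ∈ s, i ∈ Icc 1 m := fun i hi => mem_Icc.mpr (hs i hi)
    refine ⟨⟨Multiset.le_iff_count.mpr fun i => ?_, fun i hi => hsub i (by simpa using hS hi)⟩,
      hcard, hS⟩
    by_cases hi : i ∈ s
    · rw [Multiset.count_nsmul, Multiset.count_eq_one_of_mem (Icc 1 m).nodup (hsub i hi)]
      exact (Multiset.count_le_card i s).trans (by omega)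
    · simp [Multiset.count_eq_zero_of_notMem hi]

lemma overp_eq_card_filter (m n k N : ℕ) :
    overp m n k N = #{x ∈ overpartitionsInBox m n | x.1.sum = N ∧ x.2.card = k} := by
  rw [overp, ← Nat.card_eq_finsetCard]
  refine Nat.card_congr
    { toFun := fun x => ⟨(x.1.1.parts, x.1.2), ?_⟩
      invFun := fun x => ⟨(⟨x.1.1, fun hi => ?_, ?_⟩, x.1.2), ?_⟩
      left_inv := fun x => rfl
      right_inv := fun x => rfl }
  · obtain ⟨⟨p, S⟩, hle, hcard, hS, rfl⟩ := x
    exact mem_filter.mpr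
      ⟨mem_overpartitionsInBox.mpr ⟨fun i hi => ⟨p.parts_pos hi, hle i hi⟩, hcard, hS⟩,
        p.parts_sum, rfl⟩
  · obtain ⟨⟨s, S⟩, hx⟩ := x
    simp only [mem_filter, mem_overpartitionsInBox] at hx
    exact (hx.1.1 _ hi).1
  · obtain ⟨⟨s, S⟩, hx⟩ := x
    simp only [mem_filter, mem_overpartitionsInBox] at hx
    exact hx.2.1
  · obtain ⟨⟨s, S⟩, hx⟩ := x
    simp only [mem_filter, mem_overpartitionsInBox] at hx
    exact ⟨fun i hi => (hx.1.1 i hi).2, hx.1.2.1, hx.1.2.2, hx.2.2⟩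

lemma sum_le_of_mem_overpartitionsInBox {m n : ℕ} {x : Multiset ℕ × Finset ℕ}
    (hx : x ∈ overpartitionsInBox m n) : x.1.sum ≤ m * n := by
  obtain ⟨hs, hcard, -⟩ := mem_overpartitionsInBox.mp hx
  calc x.1.sum ≤ Multiset.card x.1 • m := Multiset.sum_le_card_nsmul _ _ fun i hi => (hs i hi).2
    _ ≤ m * n := by rw [smul_eq_mul, mul_comm]; exact Nat.mul_le_mul_left m hcard

lemma card_le_of_mem_overpartitionsInBox {m n : ℕ} {x : Multiset ℕ × Finset ℕ}
    (hx : x ∈ overpartitionsInBox m n) : x.2.card ≤ n := by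
  obtain ⟨-, hcard, hS⟩ := mem_overpartitionsInBox.mp hx
  exact (card_le_card hS).trans ((Multiset.toFinset_card_le _).trans hcard)

lemma overpartitionsInBox_eq_singleton {m n : ℕ} (h : m = 0 ∨ n = 0) :
    overpartitionsInBox m n = {(0, ∅)} := by
  ext ⟨s, S⟩
  simp only [mem_overpartitionsInBox, mem_singleton, Prod.mk.injEq]
  constructor
  · rintro ⟨hs, hcard, hS⟩
    have hs0 : s = 0 := by
      rcases h with rfl | rfl
      · exact Multiset.eq_zero_of_forall_notMem fun i hi => by have := hs i hi; omega
      · exact Multiset.card_eq_zero.mp (Nat.le_zero.mp hcard)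
    subst hs0
    exact ⟨rfl, subset_empty.mp hS⟩
  · rintro ⟨rfl, rfl⟩
    simp

lemma filter_notMem_overpartitionsInBox_succ (m n : ℕ) :
    {x ∈ overpartitionsInBox (m + 1) n | m + 1 ∉ x.1} = overpartitionsInBox m n := by
  ext ⟨s, S⟩
  simp only [mem_filter, mem_overpartitionsInBox]
  constructor
  · rintro ⟨⟨hs, hcard, hS⟩, hm⟩
    refine ⟨fun i hi => ⟨(hs i hi).1, ?_⟩, hcard, hS⟩
    have := (hs i hi).2
    have : i ≠ m + 1 := by rintro rfl; exact hm hi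
    omega
  · rintro ⟨hs, hcard, hS⟩
    exact ⟨⟨fun i hi => ⟨(hs i hi).1, (hs i hi).2.trans m.le_succ⟩, hcard, hS⟩,
      fun hm => by have := (hs _ hm).2; omega⟩

section GeneratingFunction

variable {R : Type*} [CommRing R] (q t : R)

lemma Oqt_eq_sum_overpartitionsInBox (m n : ℕ) :
    Oqt q t m n = ∑ x ∈ overpartitionsInBox m n, t ^ x.2.card * q ^ x.1.sum := by
  rw [Oqt, ← sum_fiberwise_of_maps_to fun x hx =>
    mem_range_succ_iff.mpr (sum_le_of_mem_overpartitionsInBox hx)]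
  refine sum_congr rfl fun N _ => ?_
  rw [← sum_fiberwise_of_maps_to fun x hx =>
    mem_range_succ_iff.mpr (card_le_of_mem_overpartitionsInBox (mem_filter.mp hx).1)]
  refine sum_congr rfl fun k _ => ?_
  rw [overp_eq_card_filter, filter_filter, mul_assoc, ← nsmul_eq_mul, ← sum_const]
  refine sum_congr rfl fun x hx => ?_
  rw [(mem_filter.mp hx).2.1, (mem_filter.mp hx).2.2]

lemma Oqt_eq_one {m n : ℕ} (h : m = 0 ∨ n = 0) :
    Oqt q t m n = 1 := by
  simp [Oqt_eq_sum_overpartitionsInBox, overpartitionsInBox_eq_singleton h]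

variable (m k : ℕ)

lemma sum_filter_overpartitionsInBox_of_not_single_overlined :
    ∑ x ∈ overpartitionsInBox (m + 1) (k + 1) with
        m + 1 ∈ x.1 ∧ ¬(m + 1 ∈ x.2 ∧ x.1.count (m + 1) = 1), t ^ x.2.card * q ^ x.1.sum =
      q ^ (m + 1) * ∑ x ∈ overpartitionsInBox (m + 1) k, t ^ x.2.card * q ^ x.1.sum := by
  rw [mul_sum]
  symm
  refine sum_nbij' (fun x => ((m + 1) ::ₘ x.1, x.2)) (fun x => (x.1.erase (m + 1), x.2))
    ?_ ?_ (fun x _ => by simp) ?_ (fun x _ => by simp only [Multiset.sum_cons, pow_add]; ring)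
  · rintro ⟨s, S⟩ hx
    obtain ⟨hs, hcard, hS⟩ := mem_overpartitionsInBox.mp hx
    simp only [mem_filter, mem_overpartitionsInBox, Multiset.mem_cons, Multiset.card_cons,
      Multiset.count_cons_self, Multiset.toFinset_cons]
    refine ⟨⟨?_, by omega, hS.trans (subset_insert _ _)⟩, .inl trivial, fun ⟨hmS, hcount⟩ => ?_⟩
    · rintro i (rfl | hi)
      exacts [⟨m.succ_pos, le_rfl⟩, hs i hi]
    · exact Multiset.count_ne_zero.mpr (Multiset.mem_toFinset.mp (hS hmS)) (by omega)
  · rintro ⟨s, S⟩ hx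
    simp only [mem_filter, mem_overpartitionsInBox] at hx
    obtain ⟨⟨hs, hcard, hS⟩, hm, hsingle⟩ := hx
    dsimp only
    refine mem_overpartitionsInBox.mpr ⟨fun i hi => hs i (Multiset.mem_of_mem_erase hi), ?_,
      fun i hi => ?_⟩
    · rw [Multiset.card_erase_of_mem hm, Nat.pred_eq_sub_one]
      omega
    · rw [Multiset.mem_toFinset]
      rcases eq_or_ne i (m + 1) with rfl | hne
      · rw [← Multiset.count_pos, Multiset.count_erase_self]
        have := Multiset.count_pos.mpr hm
        have : Multiset.count (m + 1) s ≠ 1 := fun h => hsingle ⟨hi, h⟩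
        omega
      · exact (Multiset.mem_erase_of_ne hne).mpr (Multiset.mem_toFinset.mp (hS hi))
  · rintro ⟨s, S⟩ hx
    simp only [mem_filter] at hx
    simp [Multiset.cons_erase hx.2.1]

lemma sum_filter_overpartitionsInBox_of_single_overlined :
    ∑ x ∈ overpartitionsInBox (m + 1) (k + 1) with
        m + 1 ∈ x.1 ∧ (m + 1 ∈ x.2 ∧ x.1.count (m + 1) = 1), t ^ x.2.card * q ^ x.1.sum =
      t * q ^ (m + 1) * ∑ x ∈ overpartitionsInBox m k, t ^ x.2.card * q ^ x.1.sum := by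
  have hm : ∀ x ∈ overpartitionsInBox m k, m + 1 ∉ x.1 := fun x hx hm => by
    have := ((mem_overpartitionsInBox.mp hx).1 _ hm).2
    omega
  rw [mul_sum]
  symm
  refine sum_nbij' (fun x => ((m + 1) ::ₘ x.1, insert (m + 1) x.2))
    (fun x => (x.1.erase (m + 1), x.2.erase (m + 1))) ?_ ?_ ?_ ?_ ?_
  · rintro ⟨s, S⟩ hx
    have hms := hm _ hx
    obtain ⟨hs, hcard, hS⟩ := mem_overpartitionsInBox.mp hx
    simp only [mem_filter, mem_overpartitionsInBox, Multiset.mem_cons, Multiset.card_cons,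
      Multiset.count_cons_self, Multiset.toFinset_cons, Multiset.count_eq_zero_of_notMem hms]
    refine ⟨⟨?_, by omega, insert_subset_insert _ hS⟩, .inl trivial, mem_insert_self _ _, trivial⟩
    rintro i (rfl | hi)
    exacts [⟨m.succ_pos, le_rfl⟩, ⟨(hs i hi).1, (hs i hi).2.trans m.le_succ⟩]
  · rintro ⟨s, S⟩ hx
    simp only [mem_filter, mem_overpartitionsInBox] at hx
    obtain ⟨⟨hs, hcard, hS⟩, hm, hmS, hcount⟩ := hx
    have hms : m + 1 ∉ s.erase (m + 1) := by
      rw [← Multiset.count_eq_zero, Multiset.count_erase_self, hcount]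
    refine mem_overpartitionsInBox.mpr ⟨fun i hi => ?_, ?_, ?_⟩
    · have := hs i (Multiset.mem_of_mem_erase hi)
      have : i ≠ m + 1 := by rintro rfl; exact hms hi
      omega
    · rw [Multiset.card_erase_of_mem hm, Nat.pred_eq_sub_one]
      omega
    · intro i hi
      obtain ⟨hne, hiS⟩ := mem_erase.mp hi
      exact Multiset.mem_toFinset.mpr
        ((Multiset.mem_erase_of_ne hne).mpr (Multiset.mem_toFinset.mp (hS hiS)))
  · rintro ⟨s, S⟩ hx
    have hmS : m + 1 ∉ S := fun h =>
      hm _ hx (Multiset.mem_toFinset.mp ((mem_overpartitionsInBox.mp hx).2.2 h))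
    simp [erase_insert hmS]
  · rintro ⟨s, S⟩ hx
    simp only [mem_filter] at hx
    simp [Multiset.cons_erase hx.2.1, insert_erase hx.2.2.1]
  · rintro ⟨s, S⟩ hx
    have hmS : m + 1 ∉ S := fun h =>
      hm _ hx (Multiset.mem_toFinset.mp ((mem_overpartitionsInBox.mp hx).2.2 h))
    simp only [Multiset.sum_cons, card_insert_of_notMem hmS, pow_add, pow_succ]
    ring

theorem Oqt_succ_succ :
    Oqt q t (m + 1) (k + 1) =
      Oqt q t m (k + 1) + q ^ (m + 1) * Oqt q t (m + 1) k + t * q ^ (m + 1) * Oqt q t m k := by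
  simp only [Oqt_eq_sum_overpartitionsInBox]
  rw [← sum_filter_add_sum_filter_not _ (fun x => m + 1 ∈ x.1),
    ← sum_filter_add_sum_filter_not _ (fun x => m + 1 ∈ x.2 ∧ x.1.count (m + 1) = 1),
    filter_filter, filter_filter, filter_notMem_overpartitionsInBox_succ,
    sum_filter_overpartitionsInBox_of_single_overlined,
    sum_filter_overpartitionsInBox_of_not_single_overlined]
  ring

lemma mk_Oqt_zero_mul :
    (PowerSeries.mk fun k => Oqt q t 0 k * q ^ k) * (1 - PowerSeries.C q * PowerSeries.X) = 1 := by
  ext (_ | k)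
  · simp [Oqt_eq_one]
  · simp [mul_sub, ← mul_assoc, PowerSeries.coeff_succ_mul_X, Oqt_eq_one, pow_succ]

lemma mk_Oqt_succ_mul :
    (PowerSeries.mk fun k => Oqt q t (m + 1) k * q ^ k) *
        (1 - PowerSeries.C (q ^ (m + 2)) * PowerSeries.X) =
      (PowerSeries.mk fun k => Oqt q t m k * q ^ k) *
        (1 + PowerSeries.C (t * q ^ (m + 2)) * PowerSeries.X) := by
  ext (_ | k)
  · simp [Oqt_eq_one]
  · simp only [mul_sub, mul_add, mul_one, ← mul_assoc, map_sub, map_add,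
      PowerSeries.coeff_succ_mul_X, PowerSeries.coeff_mul_C, PowerSeries.coeff_mk, Oqt_succ_succ]
    ring

lemma mk_Oqt_mul_prod :
    (PowerSeries.mk fun k => Oqt q t m k * q ^ k) *
        ∏ i ∈ range (m + 1), (1 - PowerSeries.C (q ^ (i + 1)) * PowerSeries.X) =
      ∏ i ∈ range m, (1 + PowerSeries.C (t * q ^ (i + 2)) * PowerSeries.X) := by
  induction m with
  | zero => simpa using mk_Oqt_zero_mul q t
  | succ m ih =>
    rw [prod_range_succ _ (m + 1), prod_range_succ (fun i => 1 + _ * _) m, ← ih]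
    linear_combination (∏ i ∈ range (m + 1), (1 - PowerSeries.C (q ^ (i + 1)) * PowerSeries.X)) *
      mk_Oqt_succ_mul q t m

end GeneratingFunction

theorem stmt4 {R : Type*} [CommRing R] (q t : R) (n : ℕ) (hn : 0 < n) :
    (PowerSeries.mk fun k => Oqt q t (n - 1) k * q ^ k) *
        ∏ i ∈ range n, (1 - PowerSeries.C (R := R) (q ^ (i + 1)) * PowerSeries.X) =
      ∏ i ∈ range (n - 1), (1 + PowerSeries.C (R := R) (t * q ^ (i + 2)) * PowerSeries.X) := by
  obtain ⟨m, rfl⟩ := Nat.exists_eq_add_one_of_ne_zero hn.ne'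
  exact mk_Oqt_mul_prod q t m
end

section
/- For |q| < 1 (or as formal power series), the Lebesgue identity holds: ∑_{k≥0} (−tq; q)_k q^{k(k+1)/2} / (q;q)_k = (−t q^2; q^2)_∞ / (q; q^2)_∞. -/
/-!
Expand `(-tq;q)_k` by the finite `q`-binomial theorem: the `k`-th term becomes a sum over
`j + m = k`, and the left side an absolutely convergent double series. Summing first over `m`,
Euler's identity `∑ x^m q^(m(m+1)/2) / (q;q)_m = (-xq;q)_∞` at `x = q^j`, together with
`(-q^(j+1);q)_∞ = (-q;q)_∞ / (-q;q)_j` and `(q;q)_j (-q;q)_j = (q²;q²)_j`, leaves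
`(-q;q)_∞ ∑ t^j q^(j(j+1)) / (q²;q²)_j = (-q;q)_∞ (-tq²;q²)_∞` (Euler's identity in base `q²`).
Finally `(-q;q)_∞ (q;q²)_∞ = 1`. Euler's identity itself follows from the functional equation
`E(x) = (1 + xq) E(xq)`, iterated, and the continuity of `E` at `0`.
-/

open Finset Finset.HasAntidiagonal

lemma HasSum.sum_antidiagonal {α : Type*} [AddCommMonoid α] [TopologicalSpace α]
    [ContinuousAdd α] [RegularSpace α] {F : ℕ × ℕ → α} {a : α} (h : HasSum F a) :
    HasSum (fun n => ∑ p ∈ antidiagonal n, F p) a := by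
  simpa [sum_attach] using
    (sigmaAntidiagonalEquivProd.hasSum_iff.2 h).sigma fun n => hasSum_fintype _

namespace Lebesgue

def tri (n : ℕ) : ℕ := n * (n + 1) / 2

lemma two_mul_tri (n : ℕ) : 2 * tri n = n * (n + 1) :=
  Nat.mul_div_cancel' (Nat.even_mul_succ_self n).two_dvd

lemma tri_succ (n : ℕ) : tri (n + 1) = tri n + (n + 1) := by
  have := two_mul_tri n; have := two_mul_tri (n + 1); nlinarith

lemma tri_add (m n : ℕ) : tri (m + n) = tri m + tri n + m * n := by
  have := two_mul_tri m; have := two_mul_tri n; have := two_mul_tri (m + n); nlinarith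

section Algebra

variable {R : Type*} [CommRing R]

/-- `qPoch q n` is the `q`-Pochhammer symbol `(q;q)_n`. -/
def qPoch (q : R) (n : ℕ) : R := ∏ i ∈ range n, (1 - q ^ (i + 1))

@[simp] lemma qPoch_zero (q : R) : qPoch q 0 = 1 := prod_range_zero _

lemma qPoch_succ (q : R) (n : ℕ) : qPoch q (n + 1) = qPoch q n * (1 - q ^ (n + 1)) :=
  prod_range_succ _ _

lemma qPoch_mul_prod_one_add_pow (q : R) (n : ℕ) :
    qPoch q n * ∏ i ∈ range n, (1 + q ^ (i + 1)) = qPoch (q ^ 2) n := by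
  rw [qPoch, qPoch, ← prod_mul_distrib]
  refine prod_congr rfl fun i _ => ?_
  ring

end Algebra

section Field

variable {K : Type*} [Field K] {q : K}

lemma qPoch_ne_zero (hq : ∀ n, q ^ (n + 1) ≠ 1) (n : ℕ) : qPoch q n ≠ 0 :=
  prod_ne_zero_iff.2 fun i _ => sub_ne_zero.2 (hq i).symm

/-- The finite `q`-binomial theorem, divided by `(q;q)_k`. -/
theorem prod_one_add_mul_pow_div_qPoch (hq : ∀ n, q ^ (n + 1) ≠ 1) (t : K) (k : ℕ) :
    (∏ i ∈ range k, (1 + t * q ^ (i + 1))) / qPoch q k =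
      ∑ p ∈ antidiagonal k, t ^ p.1 * q ^ tri p.1 / (qPoch q p.1 * qPoch q p.2) := by
  set a : ℕ × ℕ → K := fun p => t ^ p.1 * q ^ tri p.1 / (qPoch q p.1 * qPoch q p.2)
  have hP := qPoch_ne_zero hq
  have h1 (n : ℕ) : 1 - q ^ (n + 1) ≠ 0 := sub_ne_zero.2 (hq n).symm
  have ha₂ (j m : ℕ) : a (j, m + 1) * (1 - q ^ (m + 1)) = a (j, m) := by
    have := hP m; have := hP j; have := h1 m
    simp only [a, qPoch_succ]
    field_simp
  have ha₁ (j m : ℕ) :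
      a (j + 1, m) * (q ^ m * (1 - q ^ (j + 1))) = t * q ^ (j + 1 + m) * a (j, m) := by
    have := hP m; have := hP j; have := h1 j
    simp only [a, qPoch_succ, tri_succ]
    field_simp
    ring
  induction k with
  | zero => simp [a, tri]
  | succ k ih =>
    -- `1 - q^(j+m) = (1 - q^m) + q^m (1 - q^j)` splits the sum into two Pascal-type halves.
    have key : (∑ p ∈ antidiagonal (k + 1), a p) * (1 - q ^ (k + 1)) =
        (1 + t * q ^ (k + 1)) * ∑ p ∈ antidiagonal k, a p := calc
      _ = ∑ p ∈ antidiagonal (k + 1),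
          (a p * (1 - q ^ p.2) + a p * (q ^ p.2 * (1 - q ^ p.1))) := by
        rw [sum_mul]
        refine sum_congr rfl fun p hp => ?_
        rw [← mem_antidiagonal.1 hp]; ring
      _ = ∑ p ∈ antidiagonal k, a p + ∑ p ∈ antidiagonal k, t * q ^ (k + 1) * a p := by
        rw [sum_add_distrib, Nat.sum_antidiagonal_succ', Nat.sum_antidiagonal_succ]
        simp only [pow_zero, sub_self, mul_zero, zero_add, ha₂, ha₁]
        congr 1
        refine sum_congr rfl fun p hp => ?_
        rw [add_right_comm, mem_antidiagonal.1 hp]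
      _ = _ := by rw [← mul_sum]; ring
    rw [prod_range_succ, qPoch_succ, div_eq_iff (mul_ne_zero (hP k) (h1 k)), mul_comm (qPoch q k),
      ← mul_assoc, key, ← ih, mul_assoc, div_mul_cancel₀ _ (hP k), mul_comm]

def lebesgueTerm (q t : K) (p : ℕ × ℕ) : K :=
  t ^ p.1 * q ^ tri p.1 / (qPoch q p.1 * qPoch q p.2) * q ^ tri (p.1 + p.2)

lemma sum_antidiagonal_lebesgueTerm (hq : ∀ n, q ^ (n + 1) ≠ 1) (t : K) (k : ℕ) :
    ∑ p ∈ antidiagonal k, lebesgueTerm q t p =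
      (∏ i ∈ range k, (1 + t * q ^ (i + 1))) * q ^ tri k / qPoch q k := by
  rw [mul_div_right_comm, prod_one_add_mul_pow_div_qPoch hq, sum_mul]
  exact sum_congr rfl fun p hp => by rw [lebesgueTerm, mem_antidiagonal.1 hp]

end Field

section Analysis

open Filter Topology

variable {𝕜 : Type*} [NormedField 𝕜] {q : 𝕜}

lemma one_sub_ne_zero_of_norm_lt_one {x : 𝕜} (hx : ‖x‖ < 1) : 1 - x ≠ 0 := fun h => by
  simp [← sub_eq_zero.1 h] at hx

lemma norm_pow_succ_lt_one (hq : ‖q‖ < 1) (n : ℕ) : ‖q ^ (n + 1)‖ < 1 := by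
  rw [norm_pow]; exact pow_lt_one₀ (norm_nonneg q) hq n.succ_ne_zero

lemma pow_succ_ne_one (hq : ‖q‖ < 1) (n : ℕ) : q ^ (n + 1) ≠ 1 := fun h =>
  one_sub_ne_zero_of_norm_lt_one (norm_pow_succ_lt_one hq n) (sub_eq_zero.2 h.symm)

lemma summable_norm_mul_pow (hq : ‖q‖ < 1) (x : 𝕜) :
    Summable fun i : ℕ => ‖x * q ^ i‖ := by
  simpa only [norm_mul, norm_pow] using
    (summable_geometric_of_lt_one (norm_nonneg q) hq).mul_left ‖x‖

lemma norm_pow_mul_pow_tri_div_qPoch_le {C : ℝ} (hC : ∀ n, ‖(qPoch q n)⁻¹‖ ≤ C)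
    (x : 𝕜) (m : ℕ) :
    ‖x ^ m * q ^ tri m / qPoch q m‖ ≤ C * (‖x‖ ^ m * ‖q‖ ^ tri m) := by
  rw [div_eq_mul_inv, norm_mul, mul_comm C, norm_mul, norm_pow, norm_pow]
  gcongr
  exact hC m

noncomputable def eulerSum (q x : 𝕜) : 𝕜 := ∑' m : ℕ, x ^ m * q ^ tri m / qPoch q m

lemma eulerSum_zero (q : 𝕜) : eulerSum q 0 = 1 := by
  rw [eulerSum, tsum_eq_single 0 fun m hm => by simp [hm]]
  simp [tri]

lemma summable_pow_mul_pow_tri [CompleteSpace 𝕜] (hq : ‖q‖ < 1) (x : 𝕜) :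
    Summable fun m => x ^ m * q ^ tri m := by
  refine summable_of_ratio_norm_eventually_le (r := 1 / 2) (by norm_num) ?_
  have hlim : Tendsto (fun m : ℕ => ‖x‖ * ‖q‖ ^ (m + 1)) atTop (𝓝 0) := by
    simpa using ((tendsto_pow_atTop_nhds_zero_of_lt_one (norm_nonneg q) hq).comp
      (tendsto_add_atTop_nat 1)).const_mul ‖x‖
  filter_upwards [hlim.eventually_le_const (by norm_num : (0 : ℝ) < 1 / 2)] with m hm
  calc ‖x ^ (m + 1) * q ^ tri (m + 1)‖
        = ‖x ^ m * q ^ tri m‖ * (‖x‖ * ‖q‖ ^ (m + 1)) := by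
        simp only [tri_succ, norm_mul, norm_pow, pow_succ, pow_add]; ring
    _ ≤ 1 / 2 * ‖x ^ m * q ^ tri m‖ := by
        rw [mul_comm (1 / 2)]; gcongr

lemma summable_pow_mul_norm_pow_tri (hq : ‖q‖ < 1) (a : ℝ) :
    Summable fun m => a ^ m * ‖q‖ ^ tri m :=
  summable_pow_mul_pow_tri (by rwa [norm_norm]) a

variable [CompleteSpace 𝕜]

lemma multipliable_one_add_mul_pow (hq : ‖q‖ < 1) (x : 𝕜) :
    Multipliable fun i : ℕ => 1 + x * q ^ i :=
  multipliable_one_add_of_summable (summable_norm_mul_pow hq x)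

lemma tprod_one_sub_mul_pow_ne_zero (hq : ‖q‖ < 1) {x : 𝕜} (hx : ‖x‖ < 1) :
    ∏' i : ℕ, (1 - x * q ^ i) ≠ 0 := by
  have hlt (i : ℕ) : ‖x * q ^ i‖ < 1 := by
    rw [norm_mul, norm_pow]
    exact mul_lt_one_of_nonneg_of_lt_one_left (norm_nonneg x) hx
      (pow_le_one₀ (norm_nonneg q) hq.le)
  simp_rw [sub_eq_add_neg]
  exact tprod_one_add_ne_zero_of_summable
    (fun i => by simpa [← sub_eq_add_neg] using one_sub_ne_zero_of_norm_lt_one (hlt i))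
    (by simpa using summable_norm_mul_pow hq x)

lemma tendsto_qPoch (hq : ‖q‖ < 1) :
    Tendsto (qPoch q) atTop (𝓝 (∏' i : ℕ, (1 - q ^ (i + 1)))) :=
  ((multipliable_one_add_mul_pow hq (-q)).congr fun i => by ring).hasProd.tendsto_prod_nat

lemma tprod_one_sub_pow_succ_ne_zero (hq : ‖q‖ < 1) :
    ∏' i : ℕ, (1 - q ^ (i + 1)) ≠ 0 := by
  simpa only [pow_succ'] using tprod_one_sub_mul_pow_ne_zero hq hq

lemma exists_norm_inv_qPoch_le (hq : ‖q‖ < 1) : ∃ C, ∀ n, ‖(qPoch q n)⁻¹‖ ≤ C := by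
  obtain ⟨C, hC⟩ :=
    ((tendsto_qPoch hq).inv₀ (tprod_one_sub_pow_succ_ne_zero hq)).norm.bddAbove_range
  exact ⟨C, fun n => hC ⟨n, rfl⟩⟩

lemma summable_pow_mul_pow_tri_div_qPoch (hq : ‖q‖ < 1) (x : 𝕜) :
    Summable fun m => x ^ m * q ^ tri m / qPoch q m := by
  obtain ⟨C, hC⟩ := exists_norm_inv_qPoch_le hq
  exact .of_norm_bounded (((summable_pow_mul_norm_pow_tri hq ‖x‖).mul_left C))
    (norm_pow_mul_pow_tri_div_qPoch_le hC x)

lemma continuousOn_eulerSum (hq : ‖q‖ < 1) :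
    ContinuousOn (eulerSum q) (Metric.closedBall 0 1) := by
  obtain ⟨C, hC⟩ := exists_norm_inv_qPoch_le hq
  refine continuousOn_tsum (fun m => by fun_prop)
    ((summable_pow_mul_norm_pow_tri hq (1 : ℝ)).mul_left C) fun m x hx => ?_
  refine (norm_pow_mul_pow_tri_div_qPoch_le hC x m).trans ?_
  have : ‖x‖ ^ m ≤ 1 ^ m := pow_le_pow_left₀ (norm_nonneg x) (by simpa using hx) m
  have : 0 ≤ C := (norm_nonneg _).trans (hC 0)
  gcongr

lemma eulerSum_eq_one_add_mul_mul (hq : ‖q‖ < 1) (x : 𝕜) :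
    eulerSum q x = (1 + x * q) * eulerSum q (x * q) := by
  have hf := summable_pow_mul_pow_tri_div_qPoch hq x
  have hg := summable_pow_mul_pow_tri_div_qPoch hq (x * q)
  have hstep (m : ℕ) : x ^ (m + 1) * q ^ tri (m + 1) / qPoch q (m + 1) -
      (x * q) ^ (m + 1) * q ^ tri (m + 1) / qPoch q (m + 1) =
      x * q * ((x * q) ^ m * q ^ tri m / qPoch q m) := by
    have := qPoch_ne_zero (pow_succ_ne_one hq) m
    have := one_sub_ne_zero_of_norm_lt_one (norm_pow_succ_lt_one hq m)
    rw [qPoch_succ, tri_succ]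
    field_simp
    ring
  have hdiff : eulerSum q x - eulerSum q (x * q) = x * q * eulerSum q (x * q) := by
    rw [eulerSum, eulerSum, ← hf.tsum_sub hg, (hf.sub hg).tsum_eq_zero_add]
    simp only [hstep, tsum_mul_left]
    simp [tri]
  linear_combination hdiff

lemma eulerSum_eq_prod_mul (hq : ‖q‖ < 1) (n : ℕ) (x : 𝕜) :
    eulerSum q x = (∏ i ∈ range n, (1 + x * q ^ (i + 1))) * eulerSum q (x * q ^ n) := by
  induction n generalizing x with
  | zero => simp
  | succ n ih =>
    rw [eulerSum_eq_one_add_mul_mul hq, ih, prod_range_succ']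
    simp only [mul_assoc, ← pow_succ']
    ring

theorem eulerSum_eq_tprod (hq : ‖q‖ < 1) (x : 𝕜) :
    eulerSum q x = ∏' i : ℕ, (1 + x * q ^ (i + 1)) := by
  have hprod : Tendsto (fun n => ∏ i ∈ range n, (1 + x * q ^ (i + 1))) atTop
      (𝓝 (∏' i : ℕ, (1 + x * q ^ (i + 1)))) :=
    ((multipliable_one_add_mul_pow hq (x * q)).congr fun i => by ring).hasProd.tendsto_prod_nat
  have htail : Tendsto (fun n => eulerSum q (x * q ^ n)) atTop (𝓝 1) := by
    rw [← eulerSum_zero q]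
    refine ((continuousOn_eulerSum hq).continuousAt
      (Metric.closedBall_mem_nhds 0 one_pos)).tendsto.comp ?_
    simpa using (tendsto_pow_atTop_nhds_zero_of_norm_lt_one hq).const_mul x
  have := (hprod.mul htail).congr fun n => (eulerSum_eq_prod_mul hq n x).symm
  rw [mul_one] at this
  exact tendsto_nhds_unique tendsto_const_nhds this

/-- Cancel `(q²;q²)_∞ ≠ 0`: `(q;q)_∞` splits into its odd and even factors, and
`(-q;q)_∞ (q;q)_∞ = (q²;q²)_∞`. -/
theorem tprod_one_add_pow_mul_tprod_one_sub_pow_odd (hq : ‖q‖ < 1) :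
    (∏' i : ℕ, (1 + q ^ (i + 1))) * ∏' i : ℕ, (1 - q ^ (2 * i + 1)) = 1 := by
  have hq2 : ‖q ^ 2‖ < 1 := norm_pow_succ_lt_one hq 1
  have hsplit : (∏' i : ℕ, (1 - q ^ (2 * i + 1))) * ∏' i : ℕ, (1 - q ^ (2 * i + 2)) =
      ∏' i : ℕ, (1 - q ^ (i + 1)) :=
    tprod_even_mul_odd (f := fun i => 1 - q ^ (i + 1))
      ((multipliable_one_add_mul_pow hq2 (-q)).congr fun i => by ring)
      ((multipliable_one_add_mul_pow hq2 (-q ^ 2)).congr fun i => by ring)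
  have hpair : (∏' i : ℕ, (1 + q ^ (i + 1))) * ∏' i : ℕ, (1 - q ^ (i + 1)) =
      ∏' i : ℕ, (1 - q ^ (2 * i + 2)) := by
    rw [← ((multipliable_one_add_mul_pow hq q).congr fun i => by ring).tprod_mul
      ((multipliable_one_add_mul_pow hq (-q)).congr fun i => by ring)]
    exact tprod_congr fun i => by ring
  have heven : ∏' i : ℕ, (1 - q ^ (2 * i + 2)) ≠ 0 := by
    convert tprod_one_sub_mul_pow_ne_zero hq2 hq2 using 3 with i
    ring
  refine mul_right_cancel₀ heven ?_
  rw [mul_assoc, hsplit, hpair, one_mul]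

lemma tsum_lebesgueTerm_fst (hq : ‖q‖ < 1) (t : 𝕜) (j : ℕ) :
    ∑' m : ℕ, lebesgueTerm q t (j, m) =
      t ^ j * (q ^ 2) ^ tri j / qPoch (q ^ 2) j * eulerSum q 1 := by
  have hP := qPoch_ne_zero (pow_succ_ne_one hq)
  have hprod : ∏ i ∈ range j, (1 + q ^ (i + 1)) ≠ 0 := prod_ne_zero_iff.2 fun i _ => by
    simpa only [sub_neg_eq_add] using
      one_sub_ne_zero_of_norm_lt_one ((norm_neg _).trans_lt (norm_pow_succ_lt_one hq i))
  have hterm (m : ℕ) : lebesgueTerm q t (j, m) =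
      t ^ j * q ^ (2 * tri j) / qPoch q j * ((q ^ j) ^ m * q ^ tri m / qPoch q m) := by
    have := hP j; have := hP m
    rw [lebesgueTerm, tri_add]
    field_simp
    ring
  have hshift := eulerSum_eq_prod_mul hq j 1
  simp only [one_mul] at hshift
  rw [tsum_congr hterm, tsum_mul_left, ← eulerSum, hshift, ← qPoch_mul_prod_one_add_pow,
    ← pow_mul]
  field_simp

lemma summable_lebesgueTerm (hq : ‖q‖ < 1) (t : 𝕜) : Summable (lebesgueTerm q t) := by
  obtain ⟨C, hC⟩ := exists_norm_inv_qPoch_le hq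
  have hC0 : 0 ≤ C := (norm_nonneg _).trans (hC 0)
  refine .of_norm_bounded (((summable_pow_mul_norm_pow_tri hq ‖t‖).mul_left C).mul_of_nonneg
    ((summable_pow_mul_norm_pow_tri hq (1 : ℝ)).mul_left C)
    (fun j => by positivity) (fun m => by positivity)) fun ⟨j, m⟩ => ?_
  have hmono : ‖q‖ ^ tri (j + m) ≤ ‖q‖ ^ tri m :=
    pow_le_pow_of_le_one (norm_nonneg q) hq.le (by rw [tri_add]; omega)
  calc _ = ‖(qPoch q j)⁻¹‖ * (‖t‖ ^ j * ‖q‖ ^ tri j) *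
        (‖(qPoch q m)⁻¹‖ * ‖q‖ ^ tri (j + m)) := by
        simp only [lebesgueTerm, div_eq_mul_inv, mul_inv, norm_mul, norm_pow, norm_inv]; ring
    _ ≤ C * (‖t‖ ^ j * ‖q‖ ^ tri j) * (C * (1 ^ m * ‖q‖ ^ tri m)) := by
        rw [one_pow, one_mul]
        gcongr
        exacts [hC j, hC m]

end Analysis

end Lebesgue

open Lebesgue

/-- The Lebesgue identity. -/
theorem stmt6 (q t : ℂ) (hq : ‖q‖ < 1) :
    ∑' k : ℕ, (∏ i ∈ range k, (1 + t * q ^ (i + 1))) * q ^ (k * (k + 1) / 2) /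
        ∏ i ∈ range k, (1 - q ^ (i + 1)) =
      (∏' i : ℕ, (1 + t * q ^ (2 * i + 2))) / ∏' i : ℕ, (1 - q ^ (2 * i + 1)) := by
  have hk (k : ℕ) : (∏ i ∈ range k, (1 + t * q ^ (i + 1))) * q ^ (k * (k + 1) / 2) /
      ∏ i ∈ range k, (1 - q ^ (i + 1)) = ∑ p ∈ antidiagonal k, lebesgueTerm q t p :=
    (sum_antidiagonal_lebesgueTerm (pow_succ_ne_one hq) t k).symm
  have hG := summable_lebesgueTerm hq t
  have hsq : ∏' i : ℕ, (1 + t * (q ^ 2) ^ (i + 1)) = ∏' i : ℕ, (1 + t * q ^ (2 * i + 2)) :=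
    tprod_congr fun i => by ring
  have hodd := tprod_one_add_pow_mul_tprod_one_sub_pow_odd hq
  rw [tsum_congr hk, hG.hasSum.sum_antidiagonal.tsum_eq, hG.tsum_prod,
    tsum_congr (tsum_lebesgueTerm_fst hq t), tsum_mul_right, ← eulerSum,
    eulerSum_eq_tprod (norm_pow_succ_lt_one hq 1), eulerSum_eq_tprod hq,
    eq_div_iff (right_ne_zero_of_mul_eq_one hodd)]
  simp only [one_mul]
  rw [hsq, mul_assoc, hodd, mul_one]
end

section
/- For all positive integers n: ∑_{k=0}^{n} (−1)^k D(n−k, k) equals 0 if n is odd, equals −1 if n ≡ 2 (mod 4), and equals 1 if n ≡ 0 (mod 4), where D(m,n) are the Delannoy numbers. -/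
/-!
Put `A n = ∑_{i + j = n} (-1)^i D(j, i)`. In `A (n + 2)` the two boundary terms equal `1` and
`(-1)^n`; expanding each interior term by the Delannoy recurrence splits it into `A n` and two
copies of `A (n + 1)`, shifted in one coordinate or the other and carrying opposite signs. These
cancel up to boundary terms, leaving `A (n + 2) = -A n`, so `A` runs through `1, 0, -1, 0`.
-/

open Finset

/-- The Delannoy numbers. -/
def D : ℕ → ℕ → ℕ
  | 0, _ => 1
  | _ + 1, 0 => 1
  | m + 1, n + 1 => D m (n + 1) + D (m + 1) n + D m n

lemma D_zero_left (n : ℕ) : D 0 n = 1 := by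
  rw [D]

lemma D_zero_right (m : ℕ) : D m 0 = 1 := by
  cases m <;> rw [D]

lemma D_succ_succ (m n : ℕ) : D (m + 1) (n + 1) = D m (n + 1) + D (m + 1) n + D m n := by
  rw [D]

def altAntidiagonalSum (n : ℕ) : ℤ :=
  ∑ p ∈ antidiagonal n, (-1) ^ p.1 * (D p.2 p.1 : ℤ)

lemma sum_range_eq_altAntidiagonalSum (n : ℕ) :
    ∑ k ∈ range (n + 1), (-1 : ℤ) ^ k * (D (n - k) k : ℤ) = altAntidiagonalSum n :=
  (Nat.sum_antidiagonal_eq_sum_range_succ (fun i j => (-1 : ℤ) ^ i * (D j i : ℤ)) n).symm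

lemma altAntidiagonalSum_succ_eq_one_sub (n : ℕ) :
    altAntidiagonalSum (n + 1) = 1 - ∑ p ∈ antidiagonal n, (-1) ^ p.1 * (D p.2 (p.1 + 1) : ℤ) := by
  rw [altAntidiagonalSum, Nat.sum_antidiagonal_succ, ← sub_neg_eq_add, ← sum_neg_distrib]
  simp [D_zero_right, pow_succ]

lemma altAntidiagonalSum_succ_eq_add (n : ℕ) :
    altAntidiagonalSum (n + 1) =
      (-1) ^ (n + 1) + ∑ p ∈ antidiagonal n, (-1) ^ p.1 * (D (p.2 + 1) p.1 : ℤ) := by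
  rw [altAntidiagonalSum, Nat.sum_antidiagonal_succ']
  simp [D_zero_left]

lemma altAntidiagonalSum_add_two_eq (n : ℕ) :
    altAntidiagonalSum (n + 2) =
      1 + (-1) ^ n - ∑ p ∈ antidiagonal n, (-1) ^ p.1 * (D (p.2 + 1) (p.1 + 1) : ℤ) := by
  rw [altAntidiagonalSum, Nat.sum_antidiagonal_succ, Nat.sum_antidiagonal_succ']
  simp only [D_zero_left, D_zero_right, Nat.cast_one, pow_zero, pow_succ, mul_one, mul_neg, neg_mul,
    neg_neg, sum_neg_distrib]
  ring

lemma altAntidiagonalSum_add_two (n : ℕ) :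
    altAntidiagonalSum (n + 2) = -altAntidiagonalSum n := by
  have hsplit : ∑ p ∈ antidiagonal n, (-1) ^ p.1 * (D (p.2 + 1) (p.1 + 1) : ℤ) =
      ∑ p ∈ antidiagonal n, (-1) ^ p.1 * (D p.2 (p.1 + 1) : ℤ) +
        ∑ p ∈ antidiagonal n, (-1) ^ p.1 * (D (p.2 + 1) p.1 : ℤ) + altAntidiagonalSum n := by
    simp only [altAntidiagonalSum, D_succ_succ, ← sum_add_distrib]
    refine sum_congr rfl fun p _ => ?_
    push_cast
    ring
  linear_combination altAntidiagonalSum_add_two_eq n - hsplit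
    - altAntidiagonalSum_succ_eq_one_sub n + altAntidiagonalSum_succ_eq_add n

lemma altAntidiagonalSum_eq (n : ℕ) :
    altAntidiagonalSum n = if Odd n then 0 else if n % 4 = 2 then -1 else 1 := by
  induction n using Nat.twoStepInduction with
  | zero => simp [altAntidiagonalSum, D_zero_left]
  | one => simp [altAntidiagonalSum, D_zero_left, D_zero_right, Nat.sum_antidiagonal_succ]
  | more n ih _ =>
    rw [altAntidiagonalSum_add_two, ih]
    simp only [Nat.odd_iff]
    split_ifs <;> omega

theorem stmt11_general (n : ℕ) :
    ∑ k ∈ range (n + 1), (-1 : ℤ) ^ k * (D (n - k) k : ℤ) =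
      if Odd n then 0 else if n % 4 = 2 then -1 else 1 := by
  rw [sum_range_eq_altAntidiagonalSum, altAntidiagonalSum_eq]

theorem stmt11 (n : ℕ) (hn : 0 < n) :
    ∑ k ∈ range (n + 1), (-1 : ℤ) ^ k * (D (n - k) k : ℤ) =
      if Odd n then 0 else if n % 4 = 2 then -1 else 1 :=
  stmt11_general n
end

section
/- For non-negative integers m, n: D(m,n) = ∑_{k=0}^{min(m,n)} C(n,k)·C(m+n−k, n), where D is the Delannoy number and C denotes the binomial coefficient. -/
/-!
Substituting `j = n - k` turns the sum into `∑ⱼ C(n, j) C(m + j, n)`. Pascal's rule in the second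
factor, and then in the first, shows that this sum satisfies the Delannoy recurrence, and it
equals `1` on both axes.
-/

open Finset

def delannoySum (m n : ℕ) : ℕ := ∑ j ∈ range (n + 1), n.choose j * (m + j).choose n

lemma delannoySum_eq_sum_range (m : ℕ) {n N : ℕ} (hN : n + 1 ≤ N) :
    delannoySum m n = ∑ j ∈ range N, n.choose j * (m + j).choose n := by
  refine sum_subset (range_subset_range.2 hN) fun j _ hj => ?_
  rw [mem_range, not_lt] at hj
  rw [Nat.choose_eq_zero_of_lt (by omega), zero_mul]

lemma delannoySum_zero_left (n : ℕ) : delannoySum 0 n = 1 := by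
  rw [delannoySum, sum_eq_single_of_mem n (self_mem_range_succ n)]
  · simp
  · intro j hj hjn
    rw [mem_range] at hj
    rw [zero_add, Nat.choose_eq_zero_of_lt (n := j) (by omega), mul_zero]

lemma delannoySum_zero_right (m : ℕ) : delannoySum m 0 = 1 := by
  simp [delannoySum]

lemma sum_range_choose_succ_mul_choose (m n : ℕ) :
    ∑ j ∈ range (n + 2), (n + 1).choose j * (m + j).choose n
      = delannoySum m n + delannoySum (m + 1) n := by
  rw [delannoySum_eq_sum_range m (Nat.le_succ _), sum_range_succ', sum_range_succ' _ (n + 1),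
    delannoySum]
  simp only [Nat.choose_succ_succ', add_mul, sum_add_distrib, Nat.choose_zero_right,
    add_right_comm m 1, add_assoc m]
  ring

lemma delannoySum_succ_succ (m n : ℕ) :
    delannoySum (m + 1) (n + 1)
      = delannoySum m (n + 1) + delannoySum (m + 1) n + delannoySum m n := by
  rw [add_assoc, add_comm (delannoySum (m + 1) n), ← sum_range_choose_succ_mul_choose,
    delannoySum, delannoySum, ← sum_add_distrib]
  refine sum_congr rfl fun j _ => ?_
  rw [add_right_comm, Nat.choose_succ_succ', mul_add, add_comm]

lemma D_eq_delannoySum : ∀ m n, D m n = delannoySum m n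
  | 0, n => by rw [D, delannoySum_zero_left]
  | m + 1, 0 => by rw [D, delannoySum_zero_right]
  | m + 1, n + 1 => by
      rw [D, D_eq_delannoySum m (n + 1), D_eq_delannoySum (m + 1) n, D_eq_delannoySum m n,
        delannoySum_succ_succ]

lemma delannoySum_eq_sum_choose_sub (m n : ℕ) :
    delannoySum m n = ∑ k ∈ range (n + 1), n.choose k * (m + n - k).choose n := by
  rw [delannoySum, ← sum_range_reflect]
  refine sum_congr rfl fun j hj => ?_
  rw [mem_range] at hj
  rw [show n + 1 - 1 - j = n - j by omega, Nat.choose_symm (by omega),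
    show m + (n - j) = m + n - j by omega]

theorem stmt12 (m n : ℕ) :
    D m n = ∑ k ∈ range (min m n + 1), Nat.choose n k * Nat.choose (m + n - k) n := by
  rw [D_eq_delannoySum, delannoySum_eq_sum_choose_sub]
  -- the terms with `m < k` vanish, as then `m + n - k < n`
  refine (sum_subset (range_subset_range.2 (by omega)) fun k hkn hkm => ?_).symm
  rw [mem_range] at hkn
  rw [mem_range, not_lt] at hkm
  rw [Nat.choose_eq_zero_of_lt (n := m + n - k) (by omega), mul_zero]
end
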